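/- arXiv:1003.2124 — 8 statements merged into one kernel-verified Lean document; each statement's English description precedes it below -/
import Mathlib

section
/- The number of inverting compositions of length n equals n!. -/
/-- The largest part of a composition (0 for the empty composition). -/
def maxPart (α : List ℕ) : ℕ := α.foldr max 0

/-- A composition: a list of positive integers. -/
def IsComposition (α : List ℕ) : Prop := ∀ x ∈ α, 0 < x

/-- A composition is inverting if for each `i > 1` not exceeding the largest part,
there are indices `s < t` with `α_s = i` and `α_t = i - 1`. -/
def Inverting (α : List ℕ) : Prop :=
  ∀ i, 1 < i → i ≤ maxPart α →
    ∃ s t, s < t ∧ t < α.length ∧ α.getD s 0 = i ∧ α.getD t 0 = i - 1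

/-!
List the positions `0, …, n - 1` of an inverting composition `α` in increasing order of
`(α_v, v)`, i.e. by the standardization of `α`. The inverting condition says that every value up
to the largest part occurs and that the last position carrying `i - 1` comes after the first one
carrying `i`; hence the blocks of equal parts are exactly the maximal ascending runs of this list,
and `α` is recovered by numbering the runs. Conversely, numbering the ascending runs of any
arrangement of `0, …, n - 1` gives an inverting composition whose standardization is that
arrangement, so inverting compositions of length `n` are in bijection with the `n!` permutations.
-/

lemma le_maxPart_iff {α : List ℕ} {i : ℕ} (hi : 0 < i) : i ≤ maxPart α ↔ ∃ x ∈ α, i ≤ x := by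
  induction α with
  | nil => simpa [maxPart] using hi.ne'
  | cons a t ih => simp [maxPart, ← ih]

lemma IsComposition.getD_pos {α : List ℕ} (hc : IsComposition α) {a : ℕ} (ha : a < α.length) :
    0 < α.getD a 0 := by
  rw [List.getD_eq_getElem _ _ ha]
  exact hc _ (List.getElem_mem ha)

lemma getD_le_maxPart (α : List ℕ) (a : ℕ) : α.getD a 0 ≤ maxPart α := by
  induction α generalizing a with
  | nil => simp
  | cons x t ih =>
    cases a with
    | zero => simp [maxPart]
    | succ a => exact (ih a).trans (by simp [maxPart])

lemma List.card_perm_eq_factorial {α : Type*} [DecidableEq α] {s : List α} (hs : s.Nodup) :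
    Nat.card {l : List α // l.Perm s} = s.length.factorial := by
  rw [← List.length_permutations, ← List.toFinset_card_of_nodup (List.nodup_permutations _ hs),
    ← Nat.card_eq_finsetCard]
  exact Nat.card_congr (Equiv.subtypeEquivRight fun l => by simp)

def descentsBefore (w : List ℕ) (p : ℕ) : ℕ :=
  ((Finset.range p).filter fun k => w.getD (k + 1) 0 < w.getD k 0).card

section Descents

variable (w : List ℕ)

lemma descentsBefore_succ (p : ℕ) : descentsBefore w (p + 1) =
    descentsBefore w p + if w.getD (p + 1) 0 < w.getD p 0 then 1 else 0 := by
  unfold descentsBefore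
  rw [Finset.range_add_one, Finset.filter_insert]
  split_ifs <;> simp

lemma exists_descentsBefore_eq_of_lt {m p : ℕ} (h : m < descentsBefore w p) :
    ∃ k < p, descentsBefore w k = m ∧ w.getD (k + 1) 0 < w.getD k 0 := by
  induction p with
  | zero => simp [descentsBefore] at h
  | succ p ih =>
    rw [descentsBefore_succ] at h
    by_cases hm : m < descentsBefore w p
    · obtain ⟨k, hk, hkm⟩ := ih hm
      exact ⟨k, by omega, hkm⟩
    · split_ifs at h with hd
      · exact ⟨p, by omega, by omega, hd⟩
      · omega

end Descents

def stdKey (α : List ℕ) (v : ℕ) : ℕ ×ₗ ℕ := toLex (α.getD v 0, v)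

lemma stdKey_lt_stdKey {α : List ℕ} {u v : ℕ} : stdKey α u < stdKey α v ↔
    α.getD u 0 < α.getD v 0 ∨ α.getD u 0 = α.getD v 0 ∧ u < v :=
  Prod.Lex.toLex_lt_toLex

lemma stdKey_injective (α : List ℕ) : Function.Injective (stdKey α) :=
  fun _ _ h => congrArg (fun x => (ofLex x).2) h

lemma eq_of_perm_of_sortedLT_map_stdKey {α w w' : List ℕ} (hw : (w.map (stdKey α)).SortedLT)
    (hw' : (w'.map (stdKey α)).SortedLT) (h : w.Perm w') : w = w' :=
  List.map_injective_iff.mpr (stdKey_injective α)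
    ((h.map _).eq_of_sortedLE hw.sortedLE hw'.sortedLE)

lemma exists_perm_range_sortedLT_map_stdKey (α : List ℕ) (n : ℕ) :
    ∃ w : List ℕ, w.Perm (List.range n) ∧ (w.map (stdKey α)).SortedLT := by
  let w := (List.range n).mergeSort fun u v => decide (stdKey α u ≤ stdKey α v)
  have hw : w.Perm (List.range n) := List.mergeSort_perm _ _
  have hle : w.Pairwise fun u v => decide (stdKey α u ≤ stdKey α v) :=
    List.pairwise_mergeSort (fun _ _ _ => by simpa using le_trans)
      (fun u v => by simpa using le_total _ _) _
  refine ⟨w, hw, List.Pairwise.sortedLT (List.pairwise_map.mpr ?_)⟩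
  refine (hle.and (hw.nodup_iff.mpr List.nodup_range)).imp fun ⟨huv, hne⟩ => ?_
  exact lt_of_le_of_ne (by simpa using huv) ((stdKey_injective α).ne hne)

-- The part of the letter `v` is the number of the ascending run of `w` that contains it.
def runComposition (n : ℕ) (w : List ℕ) : List ℕ :=
  (List.range n).map fun v => descentsBefore w (w.idxOf v) + 1

section RunComposition

variable {n : ℕ} {w : List ℕ}

@[simp] lemma length_runComposition : (runComposition n w).length = n := by
  simp [runComposition]

lemma isComposition_runComposition : IsComposition (runComposition n w) := by
  simp [runComposition, IsComposition]

lemma runComposition_getD_getElem (hw : w.Perm (List.range n)) {p : ℕ} (hp : p < w.length) :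
    (runComposition n w).getD w[p] 0 = descentsBefore w p + 1 := by
  have hpn : w[p] < n := List.mem_range.mp (hw.subset (List.getElem_mem hp))
  simp [runComposition, hpn, (hw.nodup_iff.mpr List.nodup_range).idxOf_getElem]

lemma sortedLT_map_stdKey_runComposition (hw : w.Perm (List.range n)) :
    (w.map (stdKey (runComposition n w))).SortedLT := by
  refine List.sortedLT_iff_isChain.mpr (List.isChain_iff_getElem.mpr fun p hp => ?_)
  simp only [List.length_map] at hp
  have hne : w[p] ≠ w[p + 1] := fun h => by
    have := (hw.nodup_iff.mpr List.nodup_range).getElem_inj_iff.mp h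
    omega
  rw [List.getElem_map, List.getElem_map, stdKey_lt_stdKey, runComposition_getD_getElem hw,
    runComposition_getD_getElem hw, descentsBefore_succ, List.getD_eq_getElem _ _ hp,
    List.getD_eq_getElem _ _ (by omega)]
  split_ifs with hd
  · exact Or.inl (by omega)
  · exact Or.inr ⟨by omega, by omega⟩

lemma runComposition_injective {w' : List ℕ} (hw : w.Perm (List.range n))
    (hw' : w'.Perm (List.range n)) (h : runComposition n w = runComposition n w') : w = w' :=
  eq_of_perm_of_sortedLT_map_stdKey (sortedLT_map_stdKey_runComposition hw)
    (h ▸ sortedLT_map_stdKey_runComposition hw') (hw.trans hw'.symm)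

lemma inverting_runComposition (hw : w.Perm (List.range n)) : Inverting (runComposition n w) := by
  intro i hi1 hi
  obtain ⟨x, hx, hix⟩ := (le_maxPart_iff (by omega)).mp hi
  obtain ⟨v, hv, rfl⟩ := List.mem_map.mp hx
  have hvw : w.idxOf v < w.length := List.idxOf_lt_length_iff.mpr (hw.mem_iff.mpr hv)
  obtain ⟨k, hk, hkd, hdesc⟩ :=
    exists_descentsBefore_eq_of_lt w (m := i - 2) (p := w.idxOf v) (by omega)
  rw [List.getD_eq_getElem _ _ (by omega), List.getD_eq_getElem _ _ (by omega)] at hdesc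
  refine ⟨w[k + 1], w[k], hdesc, ?_, ?_, ?_⟩
  · simpa using List.mem_range.mp (hw.subset (List.getElem_mem (by omega : k < w.length)))
  · rw [runComposition_getD_getElem hw, descentsBefore_succ, List.getD_eq_getElem _ _ (by omega),
      List.getD_eq_getElem _ _ (by omega), if_pos hdesc]
    omega
  · rw [runComposition_getD_getElem hw]
    omega

end RunComposition

lemma Inverting.getD_eq_one_of_forall_le {α : List ℕ} (hinv : Inverting α) (hc : IsComposition α)
    {a : ℕ} (ha : a < α.length) (hmin : ∀ v < α.length, α.getD a 0 ≤ α.getD v 0) :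
    α.getD a 0 = 1 := by
  have hpos := hc.getD_pos ha
  by_contra hne
  obtain ⟨s, t, -, ht, -, hαt⟩ := hinv _ (by omega) (getD_le_maxPart α a)
  have := hmin t ht
  omega

-- The witnesses `s < t` for the part of `b` satisfy `b ≤ s` and `t ≤ a`, which forces `b < a`.
lemma Inverting.getD_eq_of_adjacent {α : List ℕ} (hinv : Inverting α) (hc : IsComposition α)
    {a b : ℕ} (ha : a < α.length) (hab : stdKey α a < stdKey α b)
    (hadj : ∀ v < α.length, ¬ (stdKey α a < stdKey α v ∧ stdKey α v < stdKey α b)) :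
    α.getD b 0 = α.getD a 0 + if b < a then 1 else 0 := by
  rcases stdKey_lt_stdKey.mp hab with hlt | ⟨heq, hlt⟩
  · have hpos := hc.getD_pos ha
    obtain ⟨s, t, hst, ht, hαs, hαt⟩ := hinv _ (by omega) (getD_le_maxPart α b)
    have hs := hadj s (by omega)
    have ht := hadj t ht
    simp only [stdKey_lt_stdKey] at hs ht
    rw [if_pos (by omega)]
    omega
  · rw [heq, if_neg (by omega)]
    rfl

lemma Inverting.getD_getElem_of_sortedLT {α w : List ℕ} (hinv : Inverting α)
    (hc : IsComposition α) (hw : w.Perm (List.range α.length))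
    (hsort : (w.map (stdKey α)).SortedLT) {p : ℕ} (hp : p < w.length) :
    α.getD w[p] 0 = descentsBefore w p + 1 := by
  have hmem : ∀ p (hp : p < w.length), w[p] < α.length := fun p hp =>
    List.mem_range.mp (hw.subset (List.getElem_mem hp))
  have hidx : ∀ v < α.length, ∃ q, ∃ hq : q < w.length, w[q] = v := fun v hv =>
    List.getElem_of_mem (hw.mem_iff.mpr (List.mem_range.mpr hv))
  have hlt : ∀ p q (hp : p < w.length) (hq : q < w.length),
      stdKey α w[p] < stdKey α w[q] ↔ p < q := by
    intro p q hp hq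
    rw [← List.getElem_map (stdKey α), ← List.getElem_map (stdKey α)]
    exact hsort.getElem_lt_getElem_iff (hi := by simpa using hp) (hj := by simpa using hq)
  induction p with
  | zero =>
    refine hinv.getD_eq_one_of_forall_le hc (hmem 0 hp) fun v hv => ?_
    obtain ⟨q, hq, rfl⟩ := hidx v hv
    have := (hlt 0 q hp hq).mpr
    rw [stdKey_lt_stdKey] at this
    rcases q with _ | q
    · rfl
    · have := this (by omega)
      omega
  | succ p ih =>
    rw [descentsBefore_succ, List.getD_eq_getElem _ _ hp,
      List.getD_eq_getElem w 0 (by omega : p < w.length), ← add_right_comm, ← ih (by omega)]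
    refine hinv.getD_eq_of_adjacent hc (hmem _ _) ((hlt _ _ _ _).mpr (by omega))
      fun v hv ⟨h₁, h₂⟩ => ?_
    obtain ⟨q, hq, rfl⟩ := hidx v hv
    have := (hlt _ _ _ _).mp h₁
    have := (hlt _ _ _ _).mp h₂
    omega

lemma runComposition_eq_of_sortedLT {α w : List ℕ} (hinv : Inverting α) (hc : IsComposition α)
    (hw : w.Perm (List.range α.length)) (hsort : (w.map (stdKey α)).SortedLT) :
    runComposition α.length w = α := by
  refine List.ext_getElem (by simp) fun v hv hv' => ?_
  obtain ⟨q, hq, rfl⟩ := List.getElem_of_mem (hw.mem_iff.mpr (List.mem_range.mpr hv'))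
  have h₁ := runComposition_getD_getElem hw hq
  have h₂ := hinv.getD_getElem_of_sortedLT hc hw hsort hq
  rw [List.getD_eq_getElem _ _ hv] at h₁
  rw [List.getD_eq_getElem _ _ hv'] at h₂
  rw [h₁, h₂]

/-- The number of inverting compositions of length `n` equals `n!`. -/
theorem inverting_card (n : ℕ) :
    Nat.card {α : List ℕ // α.length = n ∧ IsComposition α ∧ Inverting α} =
      Nat.factorial n := by
  let f : {w : List ℕ // w.Perm (List.range n)} →
      {α : List ℕ // α.length = n ∧ IsComposition α ∧ Inverting α} := fun w =>
    ⟨runComposition n w, length_runComposition, isComposition_runComposition,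
      inverting_runComposition w.2⟩
  have hf : Function.Bijective f := by
    refine ⟨fun w w' h => Subtype.ext (runComposition_injective w.2 w'.2 (congrArg Subtype.val h)),
      fun ⟨α, hα, hc, hinv⟩ => ?_⟩
    subst hα
    obtain ⟨w, hw, hsort⟩ := exists_perm_range_sortedLT_map_stdKey α α.length
    exact ⟨⟨w, hw⟩, Subtype.ext (runComposition_eq_of_sortedLT hinv hc hw hsort)⟩
  rw [← Nat.card_eq_of_bijective f hf, List.card_perm_eq_factorial List.nodup_range,
    List.length_range]
end

section
/- For every permutation σ ∈ S_k, the destandardization d(σ) is an inverting composition of length k; that is, for each i > 1 not exceeding the largest part of d(σ), there exist indices s < t with d(σ)_s = i and d(σ)_t = i−1. -/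
/-- `σ` is the standardization of the word `w`: `σ` orders the positions of `w` by value,
ties broken left to right. -/
def IsStd {k : ℕ} (w : List ℕ) (σ : Equiv.Perm (Fin k)) : Prop :=
  w.length = k ∧ ∀ a b : Fin k,
    (σ a < σ b ↔ (w.getD (↑a) 0 < w.getD (↑b) 0 ∨ (w.getD (↑a) 0 = w.getD (↑b) 0 ∧ a < b)))

/-- `w` is the destandardization of `σ`: the lexicographically least word of positive
integers whose standardization is `σ`. -/
def IsDestd {k : ℕ} (σ : Equiv.Perm (Fin k)) (w : List ℕ) : Prop :=
  IsComposition w ∧ IsStd w σ ∧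
  ∀ v : List ℕ, IsComposition v → IsStd v σ → w = v ∨ List.Lex (· < ·) w v

lemma exists_le_mem_of_le_maxPart {α : List ℕ} {i : ℕ} (hi : 0 < i) (h : i ≤ maxPart α) :
    ∃ x ∈ α, i ≤ x := by
  induction α with
  | nil => simp [maxPart] at h; omega
  | cons a l ih =>
    rcases le_max_iff.mp h with ha | hl
    · exact ⟨a, List.mem_cons_self, ha⟩
    · obtain ⟨x, hx, hix⟩ := ih hl
      exact ⟨x, List.mem_cons_of_mem a hx, hix⟩

lemma List.lex_map_of_le_of_exists_lt {α : Type*} [PartialOrder α] {f : α → α} :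
    ∀ {l : List α}, (∀ x ∈ l, f x ≤ x) → (∃ x ∈ l, f x < x) → Lex (· < ·) (l.map f) l
  | [], _, ⟨_, hx, _⟩ => absurd hx List.not_mem_nil
  | a :: l, hle, hlt => by
    rcases (hle a mem_cons_self).lt_or_eq with ha | ha
    · exact Lex.rel ha
    · rw [map_cons, ha]
      refine Lex.cons (lex_map_of_le_of_exists_lt (fun x hx => hle x (mem_cons_of_mem a hx)) ?_)
      obtain ⟨x, hx, hfx⟩ := hlt
      rcases mem_cons.mp hx with rfl | hx
      · exact absurd ha hfx.ne
      · exact ⟨x, hx, hfx⟩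

lemma List.getD_map_of_lt {α β : Type*} {l : List α} {n : ℕ} (hn : n < l.length) (f : α → β)
    (d : α) (d' : β) : (l.map f).getD n d' = f (l.getD n d) := by
  simp [getD_eq_getElem?_getD, getElem?_eq_getElem hn]

def StdLT (w : List ℕ) {k : ℕ} (a b : Fin k) : Prop :=
  w.getD a 0 < w.getD b 0 ∨ (w.getD a 0 = w.getD b 0 ∧ a < b)

lemma isStd_iff {k : ℕ} {w : List ℕ} {σ : Equiv.Perm (Fin k)} :
    IsStd w σ ↔ w.length = k ∧ ∀ a b, σ a < σ b ↔ StdLT w a b :=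
  Iff.rfl

lemma StdLT.asymm {k : ℕ} {w : List ℕ} {a b : Fin k} (hab : StdLT w a b) : ¬StdLT w b a := by
  unfold StdLT at *
  omega

/-- Since `StdLT w` is a strict total order, only one direction of `IsStd` needs checking. -/
lemma isStd_of_lt_imp_stdLT {k : ℕ} {w : List ℕ} {σ : Equiv.Perm (Fin k)} (hlen : w.length = k)
    (h : ∀ a b, σ a < σ b → StdLT w a b) : IsStd w σ := by
  refine isStd_iff.mpr ⟨hlen, fun a b => ⟨h a b, fun hab => ?_⟩⟩
  rcases lt_trichotomy (σ a) (σ b) with hlt | heq | hgt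
  · exact hlt
  · cases σ.injective heq
    exact absurd hab hab.asymm
  · exact absurd hab (h b a hgt).asymm

lemma IsStd.map {k : ℕ} {w : List ℕ} {σ : Equiv.Perm (Fin k)} (hw : IsStd w σ) {f : ℕ → ℕ}
    (hf : Monotone f)
    (hmerge : ∀ a b : Fin k, w.getD a 0 < w.getD b 0 → f (w.getD a 0) = f (w.getD b 0) → a < b) :
    IsStd (w.map f) σ := by
  obtain ⟨hlen, hstd⟩ := isStd_iff.mp hw
  have hget : ∀ a : Fin k, (w.map f).getD a 0 = f (w.getD a 0) := fun a =>
    List.getD_map_of_lt (hlen ▸ a.isLt) f 0 0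
  refine isStd_of_lt_imp_stdLT (by rw [List.length_map, hlen]) fun a b hab => ?_
  simp only [StdLT, hget]
  rcases (hstd a b).mp hab with hlt | ⟨heq, hab⟩
  · rcases (hf hlt.le).lt_or_eq with hflt | hfeq
    · exact Or.inl hflt
    · exact Or.inr ⟨hfeq, hmerge a b hlt hfeq⟩
  · exact Or.inr ⟨congrArg f heq, hab⟩

def lowerFrom (i x : ℕ) : ℕ := if i ≤ x then x - 1 else x

lemma lowerFrom_monotone (i : ℕ) : Monotone (lowerFrom i) := by
  intro x y hxy
  unfold lowerFrom
  split_ifs <;> omega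

lemma lowerFrom_le (i x : ℕ) : lowerFrom i x ≤ x := by
  unfold lowerFrom
  split_ifs <;> omega

lemma lowerFrom_lt {i x : ℕ} (hi : 0 < i) (hx : i ≤ x) : lowerFrom i x < x := by
  rw [lowerFrom, if_pos hx]
  omega

lemma lowerFrom_pos {i x : ℕ} (hi : 1 < i) (hx : 0 < x) : 0 < lowerFrom i x := by
  unfold lowerFrom
  split_ifs <;> omega

lemma eq_of_lowerFrom_eq {i x y : ℕ} (hi : 0 < i) (hxy : x < y)
    (h : lowerFrom i x = lowerFrom i y) : x = i - 1 ∧ y = i := by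
  unfold lowerFrom at h
  split_ifs at h <;> omega

/-- For every permutation `σ ∈ S_k`, the destandardization `d(σ)` is an inverting
composition of length `k`. -/
theorem destd_inverting (k : ℕ) (σ : Equiv.Perm (Fin k)) (w : List ℕ)
    (h : IsDestd σ w) : w.length = k ∧ IsComposition w ∧ Inverting w := by
  obtain ⟨hcomp, hstd, hmin⟩ := h
  refine ⟨hstd.1, hcomp, fun i hi hmax => ?_⟩
  by_contra hno
  push Not at hno
  have hvcomp : IsComposition (w.map (lowerFrom i)) := by
    simpa [IsComposition] using fun x hx => lowerFrom_pos hi (hcomp x hx)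
  have hvstd : IsStd (w.map (lowerFrom i)) σ := by
    refine hstd.map (lowerFrom_monotone i) fun a b hlt heq => ?_
    obtain ⟨ha, hb⟩ := eq_of_lowerFrom_eq (by omega) hlt heq
    rcases lt_trichotomy a b with hab | rfl | hba
    · exact hab
    · omega
    · exact absurd ha (hno b a hba (hstd.1 ▸ a.isLt) hb)
  obtain ⟨x, hx, hix⟩ := exists_le_mem_of_le_maxPart (by omega) hmax
  have hvlt : List.Lex (· < ·) (w.map (lowerFrom i)) w :=
    List.lex_map_of_le_of_exists_lt (fun y _ => lowerFrom_le i y)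
      ⟨x, hx, lowerFrom_lt (by omega) hix⟩
  rcases hmin _ hvcomp hvstd with heq | hwlt
  · exact List.lex_irrefl (fun x => lt_irrefl x) w (by rwa [← heq] at hvlt)
  · exact _root_.asymm hwlt hvlt
end

section
/- The map σ ↦ d(σ) is a bijection between the symmetric group S_n and the set of inverting compositions of length n. -/
namespace Equiv.Perm

variable {n : ℕ}

/-- The position `σ⁻¹ j` of rank `j`, extended by the identity to ranks `j ≥ n`. -/
def rankPos (σ : Perm (Fin n)) (j : ℕ) : ℕ :=
  if h : j < n then (σ⁻¹ ⟨j, h⟩ : ℕ) else j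

def IsDescent (σ : Perm (Fin n)) (j : ℕ) : Prop :=
  σ.rankPos (j + 1) < σ.rankPos j

instance (σ : Perm (Fin n)) : DecidablePred σ.IsDescent :=
  fun _ => inferInstanceAs (Decidable (_ < _))

variable {σ : Perm (Fin n)} {j : ℕ}

lemma rankPos_of_lt (hj : j < n) : σ.rankPos j = (σ⁻¹ ⟨j, hj⟩ : ℕ) := dif_pos hj

lemma rankPos_lt (hj : j < n) : σ.rankPos j < n := by
  simp [rankPos_of_lt hj]

@[simp]
lemma rankPos_apply (a : Fin n) : σ.rankPos (σ a) = a := by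
  simp [rankPos]

lemma rankPos_injOn : Set.InjOn σ.rankPos (Set.Iio n) := by
  intro j (hj : j < n) k (hk : k < n) h
  exact Fin.mk.inj (σ⁻¹.injective (Fin.val_injective (by simpa [rankPos_of_lt, hj, hk] using h)))

end Equiv.Perm

variable {n : ℕ} {σ : Equiv.Perm (Fin n)} {v w : List ℕ} {i j k : ℕ}

def atRank (w : List ℕ) (σ : Equiv.Perm (Fin n)) (j : ℕ) : ℕ :=
  w.getD (σ.rankPos j) 0

@[simp]
lemma atRank_apply (a : Fin n) : atRank w σ (σ a) = w.getD a 0 := by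
  simp [atRank]

lemma atRank_mem (hw : w.length = n) (hj : j < n) : atRank w σ j ∈ w := by
  rw [atRank, List.getD_eq_getElem _ _ (hw ▸ σ.rankPos_lt hj)]
  exact List.getElem_mem _

lemma IsComposition.pos_atRank (hc : IsComposition w) (hw : w.length = n) (hj : j < n) :
    0 < atRank w σ j :=
  hc _ (atRank_mem hw hj)

lemma le_maxPart (hx : i ∈ w) : i ≤ maxPart w :=
  List.le_max_of_le' 0 hx le_rfl

lemma maxPart_mem (hw : w ≠ []) : maxPart w ∈ w :=
  List.maximum_mem (List.foldr_max_of_ne_nil hw).symm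

theorem isStd_iff_s2 : IsStd w σ ↔
    w.length = n ∧ StrictMonoOn (fun j => toLex (atRank w σ j, σ.rankPos j)) (Set.Iio n) := by
  refine and_congr_right fun _ => ⟨fun hs j (hj : j < n) k (hk : k < n) hjk => ?_, fun hs a b => ?_⟩
  · have := (hs (σ⁻¹ ⟨j, hj⟩) (σ⁻¹ ⟨k, hk⟩)).1 (by simpa using hjk)
    simpa [Prod.Lex.toLex_lt_toLex, atRank, Equiv.Perm.rankPos_of_lt, hj, hk] using this
  · have := hs.lt_iff_lt (σ a).isLt (σ b).isLt
    simp only [atRank_apply, Equiv.Perm.rankPos_apply, Prod.Lex.toLex_lt_toLex] at this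
    exact this.symm

lemma IsStd.toLex_lt_succ (hs : IsStd w σ) (hj : j + 1 < n) :
    toLex (atRank w σ j, σ.rankPos j) < toLex (atRank w σ (j + 1), σ.rankPos (j + 1)) :=
  (isStd_iff_s2.1 hs).2 (show j < n by omega) hj (Nat.lt_succ_self j)

lemma IsStd.monotoneOn_atRank (hs : IsStd w σ) : MonotoneOn (atRank w σ) (Set.Iio n) :=
  fun _ hj _ hk hjk => by
    rcases Prod.Lex.toLex_le_toLex.1 ((isStd_iff_s2.1 hs).2.monotoneOn hj hk hjk) with h | ⟨h, _⟩
    exacts [h.le, h.le]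

lemma IsStd.rankPos_le_of_atRank_eq (hs : IsStd w σ) (hjk : j ≤ k) (hk : k < n)
    (h : atRank w σ j = atRank w σ k) : σ.rankPos j ≤ σ.rankPos k := by
  have := (isStd_iff_s2.1 hs).2.monotoneOn (show j < n by omega) hk hjk
  simpa [Prod.Lex.toLex_le_toLex, h] using this

lemma IsStd.atRank_add_le (hs : IsStd w σ) (hj : j + 1 < n) :
    atRank w σ j + (if σ.IsDescent j then 1 else 0) ≤ atRank w σ (j + 1) := by
  have h := Prod.Lex.toLex_lt_toLex.1 (hs.toLex_lt_succ hj)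
  dsimp only at h
  by_cases hd : σ.IsDescent j
  · rw [if_pos hd]
    unfold Equiv.Perm.IsDescent at hd
    omega
  · rw [if_neg hd]
    omega

def destdValue (σ : Equiv.Perm (Fin n)) : ℕ → ℕ
  | 0 => 1
  | j + 1 => destdValue σ j + if σ.IsDescent j then 1 else 0

def destd (σ : Equiv.Perm (Fin n)) : List ℕ :=
  List.ofFn fun a => destdValue σ (σ a)

lemma destdValue_monotone : Monotone (destdValue σ) :=
  monotone_nat_of_le_succ fun _ => Nat.le_add_right _ _

lemma one_le_destdValue : 1 ≤ destdValue σ j :=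
  destdValue_monotone (Nat.zero_le j)

lemma length_destd : (destd σ).length = n := List.length_ofFn

lemma getD_destd (a : Fin n) : (destd σ).getD a 0 = destdValue σ (σ a) := by
  simp [destd]

lemma atRank_destd (hj : j < n) : atRank (destd σ) σ j = destdValue σ j := by
  rw [atRank, Equiv.Perm.rankPos_of_lt hj, getD_destd]
  simp

lemma isComposition_destd : IsComposition (destd σ) := by
  simp only [IsComposition, destd, List.mem_ofFn, forall_exists_index]
  rintro _ a rfl
  exact one_le_destdValue

theorem isStd_destd : IsStd (destd σ) σ := by
  refine isStd_iff_s2.2 ⟨length_destd, strictMonoOn_of_lt_add_one Set.ordConnected_Iio ?_⟩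
  intro j _ (hj : j < n) (hj1 : j + 1 < n)
  simp only [atRank_destd hj, atRank_destd hj1, Prod.Lex.toLex_lt_toLex, destdValue]
  by_cases hd : σ.IsDescent j
  · simp [hd]
  · refine Or.inr ⟨by simp [hd], lt_of_le_of_ne (not_lt.1 hd) fun h => ?_⟩
    exact absurd (Equiv.Perm.rankPos_injOn hj hj1 h) (by omega)

lemma destdValue_le_atRank (hc : IsComposition w) (hs : IsStd w σ) :
    ∀ j < n, destdValue σ j ≤ atRank w σ j
  | 0, hn => hc.pos_atRank hs.1 hn
  | j + 1, hj => by
    have := destdValue_le_atRank hc hs j (by omega)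
    have := hs.atRank_add_le hj
    simp only [destdValue]
    omega

lemma getD_le_of_atRank_le (hv : v.length = n) (hw : w.length = n)
    (h : ∀ j < n, atRank v σ j ≤ atRank w σ j) (p : ℕ) : v.getD p 0 ≤ w.getD p 0 := by
  by_cases hp : p < n
  · simpa using h _ (σ ⟨p, hp⟩).isLt
  · simp [hv, hw, not_lt.1 hp]

lemma List.eq_or_lex_of_getD_le {v w : List ℕ} (hl : v.length = w.length)
    (h : ∀ p, v.getD p 0 ≤ w.getD p 0) : v = w ∨ List.Lex (· < ·) v w := by
  induction v generalizing w with
  | nil => exact Or.inl (List.length_eq_zero_iff.1 hl.symm).symm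
  | cons a v ih =>
    obtain _ | ⟨b, w⟩ := w
    · simp at hl
    obtain hab | rfl := (show a ≤ b by simpa using h 0).lt_or_eq
    · exact Or.inr (.rel hab)
    · refine (ih (by simpa using hl) fun p => by simpa using h (p + 1)).imp ?_ .cons
      exact congrArg _

theorem isDestd_destd : IsDestd σ (destd σ) := by
  refine ⟨isComposition_destd, isStd_destd, fun v hc hs => ?_⟩
  refine List.eq_or_lex_of_getD_le (by rw [length_destd, hs.1]) ?_
  refine getD_le_of_atRank_le (σ := σ) length_destd hs.1 fun j hj => ?_
  rw [atRank_destd hj]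
  exact destdValue_le_atRank hc hs j hj

lemma exists_isDescent_of_le_destdValue (hi : 1 < i) :
    ∀ {k}, i ≤ destdValue σ k →
      ∃ j < k, destdValue σ j = i - 1 ∧ destdValue σ (j + 1) = i ∧ σ.IsDescent j
  | 0, h => absurd h (by simp [destdValue]; omega)
  | k + 1, h => by
    by_cases hk : i ≤ destdValue σ k
    · obtain ⟨j, hjk, hj⟩ := exists_isDescent_of_le_destdValue hi hk
      exact ⟨j, by omega, hj⟩
    · by_cases hd : σ.IsDescent k
      · have hsucc : destdValue σ (k + 1) = destdValue σ k + 1 := by simp [destdValue, hd]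
        exact ⟨k, by omega, by omega, by omega, hd⟩
      · simp only [destdValue, if_neg hd] at h
        omega

theorem inverting_destd : Inverting (destd σ) := by
  intro i hi himax
  have hne : destd σ ≠ [] := by rintro h; simp [h, maxPart] at himax; omega
  obtain ⟨a, ha⟩ := List.mem_ofFn.1 (maxPart_mem hne)
  obtain ⟨j, hja, hj, hj1, hd⟩ := exists_isDescent_of_le_destdValue hi (ha.trans_ge himax)
  have hj1n : j + 1 < n := by have := (σ a).isLt; omega
  refine ⟨_, _, hd, length_destd.symm ▸ Equiv.Perm.rankPos_lt (by omega : j < n), ?_, ?_⟩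
  · rw [← atRank, atRank_destd hj1n, hj1]
  · rw [← atRank, atRank_destd (by omega), hj]

theorem exists_isStd (hw : w.length = n) : ∃ σ : Equiv.Perm (Fin n), IsStd w σ := by
  set f : Fin n → ℕ ×ₗ ℕ := fun a => toLex (w.getD a 0, a)
  have hf : Function.Injective f := fun a b h => Fin.val_injective (congrArg Prod.snd h)
  have hsort : StrictMono (f ∘ Tuple.sort f) :=
    (Tuple.monotone_sort f).strictMono_of_injective (hf.comp (Tuple.sort f).injective)
  refine ⟨(Tuple.sort f)⁻¹, hw, fun a b => ?_⟩
  rw [← hsort.lt_iff_lt]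
  simp [f, Prod.Lex.toLex_lt_toLex]

theorem IsStd.unique {τ : Equiv.Perm (Fin n)} (hσ : IsStd w σ) (hτ : IsStd w τ) : σ = τ := by
  have hlt a b : σ a < σ b ↔ τ a < τ b := (hσ.2 a b).trans (hτ.2 a b).symm
  let e : Fin n ≃o Fin n :=
    { toEquiv := σ.symm.trans τ
      map_rel_iff' := fun {a b} => by
        simpa using (le_iff_le_iff_lt_iff_lt.2 (hlt (σ.symm b) (σ.symm a))).symm }
  ext a
  have he := DFunLike.congr_fun (Subsingleton.elim (OrderIso.refl _) e) (σ a)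
  simpa [e] using congrArg Fin.val he

lemma Inverting.exists_atRank (hinv : Inverting w) (hs : IsStd w σ) (hi : 1 < i)
    (himax : i ≤ maxPart w) :
    ∃ r < n, ∃ r' < n, atRank w σ r = i ∧ atRank w σ r' = i - 1 ∧ σ.rankPos r < σ.rankPos r' := by
  obtain ⟨s, t, hst, ht, hs_i, ht_i⟩ := hinv i hi himax
  rw [hs.1] at ht
  refine ⟨σ ⟨s, by omega⟩, (σ _).isLt, σ ⟨t, ht⟩, (σ _).isLt, ?_⟩
  simpa using ⟨hs_i, ht_i, hst⟩

lemma Inverting.atRank_zero_le (hinv : Inverting w) (hs : IsStd w σ) (hn : 0 < n) :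
    atRank w σ 0 ≤ 1 := by
  by_contra! h
  obtain ⟨-, -, r', hr', -, hr'_eq, -⟩ :=
    hinv.exists_atRank hs h (le_maxPart (atRank_mem hs.1 hn))
  have := hs.monotoneOn_atRank hn hr' (Nat.zero_le r')
  omega

/-- Some `i` stands left of some `i - 1`, so in rank order the last `i - 1` and the first `i`
form a descent. -/
lemma Inverting.atRank_succ_le (hinv : Inverting w) (hc : IsComposition w) (hs : IsStd w σ)
    (hj : j + 1 < n) : atRank w σ (j + 1) ≤ atRank w σ j + if σ.IsDescent j then 1 else 0 := by
  have hmono := hs.monotoneOn_atRank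
  by_contra! hlt
  have hjn : j < n := by omega
  have hpos := hc.pos_atRank hs.1 hjn (σ := σ)
  have hjj1 := hmono hjn hj (Nat.le_succ j)
  obtain ⟨r, hr, r', hr', hr_eq, hr'_eq, hpos_lt⟩ :=
    hinv.exists_atRank hs (i := atRank w σ j + 1) (by omega)
      ((by split_ifs at hlt <;> omega : atRank w σ j + 1 ≤ atRank w σ (j + 1)).trans
        (le_maxPart (atRank_mem hs.1 hj)))
  have hjr : j + 1 ≤ r := by
    by_contra! h
    have := hmono hr hjn (by omega : r ≤ j)
    omega
  have hr'j : r' ≤ j := by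
    by_contra! h
    have := hmono hj hr' (by omega : j + 1 ≤ r')
    omega
  have hstep : atRank w σ (j + 1) = atRank w σ j + 1 := by
    have := hmono hj hr hjr
    split_ifs at hlt <;> omega
  have hdesc : σ.IsDescent j :=
    calc σ.rankPos (j + 1) ≤ σ.rankPos r := hs.rankPos_le_of_atRank_eq hjr hr (by omega)
      _ < σ.rankPos r' := hpos_lt
      _ ≤ σ.rankPos j := hs.rankPos_le_of_atRank_eq hr'j hjn (by omega)
  rw [if_pos hdesc] at hlt
  omega

lemma atRank_le_destdValue (hinv : Inverting w) (hc : IsComposition w) (hs : IsStd w σ) :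
    ∀ j < n, atRank w σ j ≤ destdValue σ j
  | 0, hn => hinv.atRank_zero_le hs hn
  | j + 1, hj => by
    have := atRank_le_destdValue hinv hc hs j (by omega)
    have := hinv.atRank_succ_le hc hs hj
    simp only [destdValue]
    omega

theorem destd_eq_of_inverting (hinv : Inverting w) (hc : IsComposition w) (hs : IsStd w σ) :
    destd σ = w := by
  have hle := getD_le_of_atRank_le (σ := σ) length_destd hs.1 fun j hj =>
    (atRank_destd hj).trans_le (destdValue_le_atRank hc hs j hj)
  have hge := getD_le_of_atRank_le (σ := σ) hs.1 length_destd fun j hj =>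
    (atRank_le_destdValue hinv hc hs j hj).trans_eq (atRank_destd hj).symm
  refine List.ext_getElem (by rw [length_destd, hs.1]) fun p h₁ h₂ => ?_
  rw [← List.getD_eq_getElem _ 0 h₁, ← List.getD_eq_getElem _ 0 h₂]
  exact (hle p).antisymm (hge p)

/-- The map `σ ↦ d(σ)` is a bijection between `S_n` and the inverting compositions of
length `n`. -/
theorem destd_bijection (n : ℕ) :
    ∃ d : Equiv.Perm (Fin n) → List ℕ,
      (∀ σ, IsDestd σ (d σ)) ∧
      Set.BijOn d Set.univ {w : List ℕ | w.length = n ∧ IsComposition w ∧ Inverting w} := by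
  refine ⟨destd, fun _ => isDestd_destd, ?mapsTo, ?injOn, ?surjOn⟩
  case mapsTo => exact fun σ _ => ⟨length_destd, isComposition_destd, inverting_destd⟩
  case injOn => exact fun σ _ τ _ h => isStd_destd.unique (h ▸ isStd_destd)
  case surjOn =>
    rintro w ⟨hw, hc, hinv⟩
    obtain ⟨σ, hσ⟩ := exists_isStd hw
    exact ⟨σ, trivial, destd_eq_of_inverting hinv hc hσ⟩
end

section
/- The number of pure and inverting compositions of length at most n (including the empty composition) is n!. -/
/-- The word `k^{e_{k-1}} ⋯ 2^{e_1} 1^{e_0}`, where `e_j` is the exponent of the value `j+1`. -/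
def suffixWord (k : ℕ) (e : List ℕ) : List ℕ :=
  ((List.range k).reverse.map (fun j => List.replicate (e.getD j 0) (j + 1))).flatten

/-- `α = γ · k^{i_k} ⋯ 2^{i_2} 1^{i_1}` with all exponents `≥ 1` and `γ` containing
none of the values `1, …, k`. -/
def IsFactorization (α : List ℕ) (k : ℕ) (γ e : List ℕ) : Prop :=
  e.length = k ∧ (∀ x ∈ e, 1 ≤ x) ∧ (∀ v ∈ γ, ¬(1 ≤ v ∧ v ≤ k)) ∧
  α = γ ++ suffixWord k e

/-- A factorization as above in which `k` is maximal. -/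
def MaxFactorization (α : List ℕ) (k : ℕ) (γ e : List ℕ) : Prop :=
  IsFactorization α k γ e ∧ ∀ k' γ' e', IsFactorization α k' γ' e' → k' ≤ k

/-- A composition is pure if the maximal `k` in its factorization is even. -/
def PureComp (α : List ℕ) : Prop := ∃ k γ e, MaxFactorization α k γ e ∧ Even k

open Function

lemma le_maxPart_s4 {α : List ℕ} {x : ℕ} (hx : x ∈ α) : x ≤ maxPart α :=
  List.le_max_of_le hx le_rfl

lemma maxPart_le {α : List ℕ} {m : ℕ} (h : ∀ x ∈ α, x ≤ m) : maxPart α ≤ m :=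
  List.max_le_of_forall_le α m h

lemma maxPart_mem_s4 {α : List ℕ} (h : 0 < maxPart α) : maxPart α ∈ α := by
  have hne : α ≠ [] := by rintro rfl; exact h.ne rfl
  exact List.maximum_mem (List.foldr_max_of_ne_nil hne).symm

lemma Inverting.mem_of_le {α : List ℕ} (hα : Inverting α) {i : ℕ} (hi : 1 ≤ i)
    (him : i ≤ maxPart α) : i ∈ α := by
  obtain rfl | hlt := him.eq_or_lt
  · exact maxPart_mem_s4 (by omega)
  obtain ⟨-, t, -, ht, -, hval⟩ := hα (i + 1) (by omega) hlt
  rw [List.getD_eq_getElem _ _ ht, Nat.add_sub_cancel] at hval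
  exact hval ▸ List.getElem_mem ht

lemma Inverting.exists_get {α : List ℕ} (hα : Inverting α) {i : ℕ} (hi : 1 < i)
    (him : i ≤ maxPart α) :
    ∃ s t : Fin α.length, s < t ∧ α.get s = i ∧ α.get t = i - 1 := by
  obtain ⟨s, t, hst, ht, hs, htv⟩ := hα i hi him
  refine ⟨⟨s, hst.trans ht⟩, ⟨t, ht⟩, hst, ?_, ?_⟩
  · rwa [List.getD_eq_getElem _ _ (hst.trans ht)] at hs
  · rwa [List.getD_eq_getElem _ _ ht] at htv

lemma List.append_replicate_inj {α : Type*} [DecidableEq α] {A B : List α} {a b : ℕ} {x : α}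
    (hA : x ∉ A) (hB : x ∉ B) (h : A ++ List.replicate a x = B ++ List.replicate b x) :
    A = B ∧ a = b := by
  have hab : a = b := by
    simpa [List.count_append, List.count_eq_zero_of_not_mem hA,
      List.count_eq_zero_of_not_mem hB] using congrArg (List.count x) h
  subst hab
  exact ⟨List.append_inj_left' h rfl, rfl⟩

lemma suffixWord_succ (K e₀ : ℕ) (e : List ℕ) :
    suffixWord (K + 1) (e₀ :: e) = (suffixWord K e).map (· + 1) ++ List.replicate e₀ 1 := by
  simp only [suffixWord, List.range_succ_eq_map, List.reverse_cons, List.map_append,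
    List.map_reverse, List.map_map, List.map_flatten, List.flatten_append]
  congr 3
  · refine List.map_congr_left fun j _ => ?_
    simp [List.map_replicate]
  · simp

lemma mem_suffixWord {K v : ℕ} {e : List ℕ} (hv : v ∈ suffixWord K e) : 1 ≤ v ∧ v ≤ K := by
  obtain ⟨l, hl, hvl⟩ := List.mem_flatten.mp hv
  obtain ⟨j, hj, rfl⟩ := List.mem_map.mp hl
  rw [List.mem_reverse, List.mem_range] at hj
  rw [List.eq_of_mem_replicate hvl]
  omega

lemma le_length_suffixWord {K : ℕ} {e : List ℕ} (hlen : e.length = K) (he : ∀ x ∈ e, 1 ≤ x) :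
    K ≤ (suffixWord K e).length := by
  induction e generalizing K with
  | nil => simp [← hlen]
  | cons e₀ e ih =>
    subst hlen
    rw [List.length_cons, suffixWord_succ, List.length_append, List.length_map,
      List.length_replicate]
    have := ih rfl fun x hx => he x (List.mem_cons_of_mem _ hx)
    have := he e₀ List.mem_cons_self
    omega

lemma isFactorization_zero (α : List ℕ) : IsFactorization α 0 α [] :=
  ⟨rfl, by simp, fun _ _ h => by omega, by simp [suffixWord]⟩

lemma IsFactorization.le_length {α γ e : List ℕ} {K : ℕ} (h : IsFactorization α K γ e) :
    K ≤ α.length := by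
  obtain ⟨hlen, he, -, rfl⟩ := h
  rw [List.length_append]
  have := le_length_suffixWord hlen he
  omega

open Classical in
noncomputable def maxRank (α : List ℕ) : ℕ :=
  Nat.findGreatest (fun K => ∃ γ e, IsFactorization α K γ e) α.length

lemma exists_isFactorization_maxRank (α : List ℕ) :
    ∃ γ e, IsFactorization α (maxRank α) γ e := by
  classical
  exact Nat.findGreatest_spec (P := fun K => ∃ γ e, IsFactorization α K γ e) (Nat.zero_le _)
    ⟨α, [], isFactorization_zero α⟩

lemma le_maxRank {α γ e : List ℕ} {K : ℕ} (h : IsFactorization α K γ e) : K ≤ maxRank α := by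
  classical
  exact Nat.le_findGreatest h.le_length ⟨γ, e, h⟩

lemma pureComp_iff_even_maxRank (α : List ℕ) : PureComp α ↔ Even (maxRank α) := by
  obtain ⟨γ, e, h⟩ := exists_isFactorization_maxRank α
  constructor
  · rintro ⟨k, γ', e', ⟨hk, hmax⟩, hev⟩
    rwa [le_antisymm (le_maxRank hk) (hmax _ _ _ h)] at hev
  · exact fun hev => ⟨_, γ, e, ⟨h, fun _ _ _ => le_maxRank⟩, hev⟩

def raise (β : List ℕ) (j : ℕ) : List ℕ := β.map (· + 1) ++ List.replicate j 1

section Raise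

variable {β : List ℕ} {j : ℕ}

lemma length_raise : (raise β j).length = β.length + j := by simp [raise]

lemma isComposition_raise : IsComposition (raise β j) := by
  intro x hx
  rcases List.mem_append.mp hx with h | h
  · obtain ⟨y, -, rfl⟩ := List.mem_map.mp h
    exact y.succ_pos
  · rw [List.eq_of_mem_replicate h]; exact Nat.one_pos

lemma IsComposition.one_notMem_map_succ (hβ : IsComposition β) : 1 ∉ β.map (· + 1) := by
  intro h
  obtain ⟨y, hy, hy1⟩ := List.mem_map.mp h
  have := hβ y hy
  omega

lemma raise_inj {β' : List ℕ} {j' : ℕ} (hβ : IsComposition β) (hβ' : IsComposition β')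
    (h : raise β j = raise β' j') : β = β' ∧ j = j' := by
  obtain ⟨hmap, hj⟩ :=
    List.append_replicate_inj hβ.one_notMem_map_succ hβ'.one_notMem_map_succ h
  exact ⟨List.map_injective_iff.mpr (add_left_injective 1) hmap, hj⟩

lemma exists_isFactorization_raise_iff (hβ : IsComposition β) (hj : 1 ≤ j) {K : ℕ} :
    (∃ γ e, IsFactorization (raise β j) (K + 1) γ e) ↔ ∃ γ e, IsFactorization β K γ e := by
  constructor
  · rintro ⟨γ, _ | ⟨e₀, e⟩, hlen, he, hγ, heq⟩
    · simp at hlen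
    rw [suffixWord_succ, ← List.append_assoc, raise] at heq
    have hγ1 : 1 ∉ γ ++ (suffixWord K e).map (· + 1) := by
      simp only [List.mem_append, List.mem_map, not_or, not_exists, not_and]
      exact ⟨fun h => hγ 1 h (by omega), fun y hy h => by
        have := (mem_suffixWord hy).1; omega⟩
    obtain ⟨hmap, -⟩ := List.append_replicate_inj hβ.one_notMem_map_succ hγ1 heq
    obtain ⟨γ₀, e', rfl, rfl, he'⟩ := List.map_eq_append_iff.mp hmap
    refine ⟨γ₀, e, ⟨by simpa using hlen, fun x hx => he x (List.mem_cons_of_mem _ hx),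
      fun v hv h => hγ (v + 1) (List.mem_map_of_mem hv) (by omega), ?_⟩⟩
    rw [List.map_injective_iff.mpr (add_left_injective 1) he']
  · rintro ⟨γ, e, hlen, he, hγ, rfl⟩
    refine ⟨γ.map (· + 1), j :: e, by simp [hlen], ?_, ?_, ?_⟩
    · simpa using ⟨hj, he⟩
    · simp only [List.mem_map]
      rintro _ ⟨v, hv, rfl⟩ h
      have := hβ v (List.mem_append_left _ hv)
      exact hγ v hv (by omega)
    · simp [raise, suffixWord_succ]

lemma maxRank_raise (hβ : IsComposition β) (hj : 1 ≤ j) :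
    maxRank (raise β j) = maxRank β + 1 := by
  apply le_antisymm
  · obtain ⟨γ, e, h⟩ := exists_isFactorization_maxRank (raise β j)
    cases hM : maxRank (raise β j) with
    | zero => exact Nat.zero_le _
    | succ M =>
      rw [hM] at h
      obtain ⟨_, _, hβM⟩ := (exists_isFactorization_raise_iff hβ hj).mp ⟨γ, e, h⟩
      exact Nat.succ_le_succ (le_maxRank hβM)
  · obtain ⟨γ, e, h⟩ := exists_isFactorization_maxRank β
    obtain ⟨_, _, h'⟩ := (exists_isFactorization_raise_iff hβ hj).mpr ⟨γ, e, h⟩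
    exact le_maxRank h'

lemma IsFactorization.exists_eq_raise {w γ e : List ℕ} {K : ℕ}
    (h : IsFactorization w (K + 1) γ e) (hw : IsComposition w) :
    ∃ β j, 1 ≤ j ∧ IsComposition β ∧ w = raise β j := by
  obtain ⟨hlen, he, hγ, rfl⟩ := h
  obtain _ | ⟨e₀, e⟩ := e
  · simp at hlen
  have hγ2 : ∀ x ∈ γ, 2 ≤ x := fun x hx => by
    have := hw x (List.mem_append_left _ hx)
    have := hγ x hx
    omega
  refine ⟨γ.map (· - 1) ++ suffixWord K e, e₀, he e₀ List.mem_cons_self, ?_, ?_⟩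
  · intro x hx
    rcases List.mem_append.mp hx with hx | hx
    · obtain ⟨y, hy, rfl⟩ := List.mem_map.mp hx
      have := hγ2 y hy
      omega
    · exact (mem_suffixWord hx).1
  · have hγ' : (γ.map (· - 1)).map (· + 1) = γ := by
      rw [List.map_map]
      refine (List.map_congr_left fun x hx => ?_).trans γ.map_id
      have := hγ2 x hx
      simp only [comp_apply, id_eq]
      omega
    rw [suffixWord_succ, raise, List.map_append, hγ', List.append_assoc]

lemma raise_getD_of_lt {s : ℕ} (h : s < β.length) :
    (raise β j).getD s 0 = β.getD s 0 + 1 := by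
  simp [raise, List.getElem?_append_left, h]

lemma raise_getD_of_le {s : ℕ} (h₁ : β.length ≤ s) (h₂ : s < β.length + j) :
    (raise β j).getD s 0 = 1 := by
  simp [raise, List.getElem?_append_right, h₁, show s - β.length < j by omega]

lemma maxPart_raise_le : maxPart (raise β j) ≤ maxPart β + 1 :=
  maxPart_le fun x hx => by
    rcases List.mem_append.mp hx with h | h
    · obtain ⟨y, hy, rfl⟩ := List.mem_map.mp h
      exact Nat.succ_le_succ (le_maxPart_s4 hy)
    · rw [List.eq_of_mem_replicate h]; exact Nat.le_add_left 1 _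

lemma inverting_raise (hinv : Inverting β) (hj : 1 ≤ j) :
    Inverting (raise β j) := by
  intro i hi him
  have him' := him.trans maxPart_raise_le
  obtain rfl | hi3 : i = 2 ∨ 3 ≤ i := by omega
  · obtain ⟨s, hs, hval⟩ := List.getElem_of_mem (hinv.mem_of_le le_rfl (by omega))
    refine ⟨s, β.length, hs, by rw [length_raise]; omega, ?_, ?_⟩
    · rw [raise_getD_of_lt hs, List.getD_eq_getElem _ _ hs, hval]
    · rw [raise_getD_of_le le_rfl (by omega)]
  · obtain ⟨s, t, hst, ht, hs, htv⟩ := hinv (i - 1) (by omega) (by omega)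
    refine ⟨s, t, hst, by rw [length_raise]; omega, ?_, ?_⟩
    · rw [raise_getD_of_lt (hst.trans ht), hs]; omega
    · rw [raise_getD_of_lt ht, htv]; omega

lemma inverting_of_raise (h : Inverting (raise β j)) : Inverting β := by
  intro i hi him
  have hmax : maxPart β + 1 ≤ maxPart (raise β j) :=
    le_maxPart_s4 (List.mem_append_left _ (List.mem_map_of_mem (maxPart_mem_s4 (by omega))))
  obtain ⟨s, t, hst, ht, hs, htv⟩ := h (i + 1) (by omega) (by omega)
  rw [length_raise] at ht
  have htβ : t < β.length := by
    by_contra h'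
    rw [raise_getD_of_le (by omega) ht] at htv
    omega
  rw [raise_getD_of_lt (hst.trans htβ)] at hs
  rw [raise_getD_of_lt htβ] at htv
  exact ⟨s, t, hst, htβ, by omega, by omega⟩

lemma not_pureComp_raise (hβ : IsComposition β) (hj : 1 ≤ j) (hp : PureComp β) :
    ¬ PureComp (raise β j) := by
  rw [pureComp_iff_even_maxRank] at hp ⊢
  rw [maxRank_raise hβ hj, Nat.even_add_one, not_not]
  exact hp

end Raise

def padTo (n : ℕ) (β : List ℕ) : List ℕ :=
  if β.length = n then β else raise β (n - β.length)

section PadTo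

variable {n : ℕ}

lemma padTo_spec {β : List ℕ} (hlen : β.length ≤ n) (hc : IsComposition β)
    (hi : Inverting β) :
    (padTo n β).length = n ∧ IsComposition (padTo n β) ∧ Inverting (padTo n β) := by
  unfold padTo
  split_ifs with h
  · exact ⟨h, hc, hi⟩
  · exact ⟨by rw [length_raise]; omega, isComposition_raise, inverting_raise hi (by omega)⟩

lemma padTo_inj {β β' : List ℕ} (hlen : β.length ≤ n) (hc : IsComposition β)
    (hp : PureComp β) (hlen' : β'.length ≤ n) (hc' : IsComposition β') (hp' : PureComp β')
    (h : padTo n β = padTo n β') : β = β' := by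
  unfold padTo at h
  split_ifs at h with h₁ h₂ h₂
  · exact h
  · exact absurd (h ▸ hp) (not_pureComp_raise hc' (by omega) hp')
  · exact absurd (h.symm ▸ hp') (not_pureComp_raise hc (by omega) hp)
  · exact (raise_inj hc hc' h).1

lemma exists_padTo_eq {w : List ℕ} (hlen : w.length = n) (hc : IsComposition w)
    (hi : Inverting w) :
    ∃ β, (β.length ≤ n ∧ IsComposition β ∧ Inverting β ∧ PureComp β) ∧ padTo n β = w := by
  by_cases hev : Even (maxRank w)
  · exact ⟨w, ⟨hlen.le, hc, hi, (pureComp_iff_even_maxRank w).mpr hev⟩, if_pos hlen⟩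
  obtain ⟨γ, e, hf⟩ := exists_isFactorization_maxRank w
  obtain ⟨M, hM⟩ := Nat.exists_eq_succ_of_ne_zero (n := maxRank w) fun h => by
    rw [h] at hev; exact hev Even.zero
  rw [hM] at hf
  obtain ⟨β, j, hj, hβ, rfl⟩ := hf.exists_eq_raise hc
  rw [maxRank_raise hβ hj, Nat.even_add_one, not_not] at hev
  have hβlen : β.length + j = n := by rw [← hlen, length_raise]
  refine ⟨β, ⟨by omega, hβ, inverting_of_raise hi, (pureComp_iff_even_maxRank β).mpr hev⟩,
    ?_⟩
  rw [padTo, if_neg (by omega), show n - β.length = j by omega]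

end PadTo

theorem card_pure_eq_card_inverting (n : ℕ) :
    Nat.card {α : List ℕ // α.length ≤ n ∧ IsComposition α ∧ Inverting α ∧ PureComp α} =
      Nat.card {α : List ℕ // α.length = n ∧ IsComposition α ∧ Inverting α} := by
  refine Nat.card_eq_of_bijective
    (fun β => ⟨padTo n β.1, padTo_spec β.2.1 β.2.2.1 β.2.2.2.1⟩) ⟨?_, ?_⟩
  · rintro ⟨β, hlen, hc, _, hp⟩ ⟨β', hlen', hc', _, hp'⟩ h
    exact Subtype.ext (padTo_inj hlen hc hp hlen' hc' hp' (congrArg Subtype.val h))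
  · rintro ⟨w, hlen, hc, hi⟩
    obtain ⟨β, hβ, rfl⟩ := exists_padTo_eq hlen hc hi
    exact ⟨⟨β, hβ⟩, rfl⟩

section RunIndex

variable {α : Type*} [LinearOrder α] (f : ℕ → α)

def runIndex (r : ℕ) : ℕ := 1 + ((Finset.range r).filter fun l => f (l + 1) < f l).card

lemma runIndex_zero : runIndex f 0 = 1 := rfl

lemma runIndex_succ (r : ℕ) :
    runIndex f (r + 1) = runIndex f r + if f (r + 1) < f r then 1 else 0 := by
  simp only [runIndex, Finset.range_add_one, Finset.filter_insert]
  split_ifs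
  · rw [Finset.card_insert_of_notMem (by simp)]; ring
  · rfl

lemma one_le_runIndex (r : ℕ) : 1 ≤ runIndex f r := Nat.le_add_right 1 _

lemma runIndex_mono : Monotone (runIndex f) :=
  monotone_nat_of_le_succ fun r => by rw [runIndex_succ]; exact Nat.le_add_right _ _

lemma exists_runIndex_jump {i R : ℕ} (hi : 2 ≤ i) (hR : i ≤ runIndex f R) :
    ∃ r, r < R ∧ runIndex f (r + 1) = i ∧ runIndex f r = i - 1 ∧ f (r + 1) < f r := by
  induction R with
  | zero => rw [runIndex_zero] at hR; omega
  | succ R ih =>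
    by_cases h : i ≤ runIndex f R
    · obtain ⟨r, hr, hrest⟩ := ih h
      exact ⟨r, by omega, hrest⟩
    · have hs := runIndex_succ f R
      split_ifs at hs with hd
      · exact ⟨R, by omega, by omega, by omega, hd⟩
      · omega

lemma lt_of_runIndex_eq (hf : Injective f) {a b : ℕ} (hab : a < b)
    (h : runIndex f a = runIndex f b) : f a < f b := by
  have step : ∀ l, a ≤ l → l < b → f l < f (l + 1) := by
    intro l hal hlb
    have h1 : runIndex f a ≤ runIndex f l := runIndex_mono f hal
    have h2 : runIndex f (l + 1) ≤ runIndex f b := runIndex_mono f hlb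
    have hs := runIndex_succ f l
    have hasc : ¬ f (l + 1) < f l := fun hd => by rw [if_pos hd] at hs; omega
    exact (not_lt.mp hasc).lt_of_ne (hf.ne (by omega))
  have key : ∀ c, a < c → c ≤ b → f a < f c := by
    intro c hac hcb
    induction c, hac using Nat.le_induction with
    | base => exact step a le_rfl hab
    | succ c hac ih => exact (ih (by omega)).trans (step c (by omega) (by omega))
  exact key b hab le_rfl

end RunIndex

section RunWord

variable {n : ℕ} (σ : Equiv.Perm (Fin n))

-- extended by the identity beyond `n`, so that it is injective on all of `ℕ`
def permSeq (l : ℕ) : ℕ := if h : l < n then σ ⟨l, h⟩ else l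

lemma permSeq_of_lt {l : ℕ} (h : l < n) : permSeq σ l = σ ⟨l, h⟩ := dif_pos h

lemma permSeq_injective : Injective (permSeq σ) := by
  intro a b hab
  unfold permSeq at hab
  split_ifs at hab with ha hb hb
  · simpa using σ.injective (Fin.ext hab)
  · have := (σ ⟨a, ha⟩).isLt; omega
  · have := (σ ⟨b, hb⟩).isLt; omega
  · exact hab

def runWord : List ℕ := List.ofFn fun p => runIndex (permSeq σ) (σ.symm p)

lemma length_runWord : (runWord σ).length = n := List.length_ofFn

lemma runWord_getD_apply (r : Fin n) :
    (runWord σ).getD (σ r) 0 = runIndex (permSeq σ) r := by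
  simp [runWord]

lemma isComposition_runWord : IsComposition (runWord σ) := by
  intro x hx
  obtain ⟨p, rfl⟩ := List.mem_ofFn.mp hx
  exact one_le_runIndex _ _

lemma inverting_runWord : Inverting (runWord σ) := by
  intro i hi hmax
  have hbound : maxPart (runWord σ) ≤ runIndex (permSeq σ) (n - 1) :=
    maxPart_le fun x hx => by
      obtain ⟨p, rfl⟩ := List.mem_ofFn.mp hx
      exact runIndex_mono _ (by omega : ((σ.symm p : Fin n) : ℕ) ≤ n - 1)
  obtain ⟨r, hr, hr1, hr0, hdesc⟩ := exists_runIndex_jump (permSeq σ) hi (hmax.trans hbound)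
  rw [permSeq_of_lt σ (by omega : r + 1 < n), permSeq_of_lt σ (by omega : r < n)] at hdesc
  refine ⟨σ ⟨r + 1, by omega⟩, σ ⟨r, by omega⟩, hdesc, by simp [length_runWord], ?_, ?_⟩
  · rw [runWord_getD_apply, hr1]
  · rw [runWord_getD_apply, hr0]

lemma eq_sort_runIndex : σ = Tuple.sort fun p => runIndex (permSeq σ) (σ.symm p) := by
  refine Tuple.eq_sort_iff.mpr ⟨fun r r' h => ?_, fun r r' h heq => ?_⟩
  · simpa using runIndex_mono _ h
  · simp only [Equiv.symm_apply_apply] at heq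
    have := lt_of_runIndex_eq _ (permSeq_injective σ) h heq
    rwa [permSeq_of_lt σ r.isLt, permSeq_of_lt σ r'.isLt] at this

lemma runWord_injective : Injective (runWord (n := n)) := fun σ τ h => by
  rw [eq_sort_runIndex σ, eq_sort_runIndex τ, List.ofFn_injective h]

end RunWord

lemma Tuple.le_of_sort_apply_eq {α : Type*} [LinearOrder α] {n : ℕ} {u : Fin n → α}
    {σ : Equiv.Perm (Fin n)} (hσ : σ = Tuple.sort u) {a b : Fin n} (hab : a ≤ b)
    (h : u (σ a) = u (σ b)) : σ a ≤ σ b := by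
  obtain rfl | hlt := hab.eq_or_lt
  · exact le_rfl
  · exact ((Tuple.eq_sort_iff.mp hσ).2 a b hlt h).le

section SortedInverting

variable {w : List ℕ} {σ : Equiv.Perm (Fin w.length)}

lemma get_sort_zero (hc : IsComposition w) (hi : Inverting w)
    (hσ : σ = Tuple.sort w.get) (hw : 0 < w.length) : w.get (σ ⟨0, hw⟩) = 1 := by
  have hmem : ∀ p, w.get p ∈ w := List.get_mem w
  obtain ⟨p, hp⟩ := List.mem_iff_get.mp (hi.mem_of_le le_rfl
    ((hc _ (hmem ⟨0, hw⟩)).trans_le (le_maxPart_s4 (hmem ⟨0, hw⟩))))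
  obtain ⟨ρ, rfl⟩ := σ.surjective p
  have hle : w.get (σ ⟨0, hw⟩) ≤ w.get (σ ρ) :=
    hσ ▸ Tuple.monotone_sort w.get (Fin.le_def.mpr (Nat.zero_le _))
  have := hc _ (hmem (σ ⟨0, hw⟩))
  omega

lemma get_sort_le_succ (hi : Inverting w) (hσ : σ = Tuple.sort w.get) {a b : Fin w.length}
    (hab : (a : ℕ) + 1 = b) : w.get (σ b) ≤ w.get (σ a) + 1 := by
  have hmono : Monotone (w.get ∘ σ) := hσ ▸ Tuple.monotone_sort w.get
  -- the value `w.get (σ a) + 1` occurs in `w`, so the sorted values cannot skip it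
  by_contra! h
  obtain ⟨p, hp⟩ := List.mem_iff_get.mp
    (hi.mem_of_le (by omega) (h.le.trans (le_maxPart_s4 (List.get_mem w (σ b)))))
  obtain ⟨ρ, rfl⟩ := σ.surjective p
  rcases le_or_gt ρ a with hρ | hρ
  · have : w.get (σ ρ) ≤ w.get (σ a) := hmono hρ
    omega
  · have : w.get (σ b) ≤ w.get (σ ρ) := hmono (Fin.le_def.mpr (by have := Fin.lt_def.mp hρ; omega))
    omega

lemma sort_lt_of_get_eq_succ (hc : IsComposition w) (hi : Inverting w) (hσ : σ = Tuple.sort w.get)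
    {a b : Fin w.length} (hab : (a : ℕ) + 1 = b) (h : w.get (σ b) = w.get (σ a) + 1) :
    σ b < σ a := by
  have hmono : Monotone (w.get ∘ σ) := hσ ▸ Tuple.monotone_sort w.get
  have hadj : ∀ ρ : Fin w.length, ρ ≤ a ∨ b ≤ ρ := fun ρ => by
    simp only [Fin.le_def]; omega
  have hpos : 1 ≤ w.get (σ a) := hc _ (List.get_mem w _)
  obtain ⟨s, t, hst, hs, ht⟩ := hi.exists_get (i := w.get (σ b)) (by omega)
    (le_maxPart_s4 (List.get_mem w _))
  obtain ⟨ρs, rfl⟩ := σ.surjective s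
  obtain ⟨ρt, rfl⟩ := σ.surjective t
  -- `σ b` is the leftmost position of the value `w.get (σ b)` and `σ a` the rightmost
  -- position of the value `w.get (σ a)`
  have hbs : σ b ≤ σ ρs := by
    rcases hadj ρs with hρ | hρ
    · have : w.get (σ ρs) ≤ w.get (σ a) := hmono hρ
      omega
    · exact Tuple.le_of_sort_apply_eq hσ hρ hs.symm
  have hta : σ ρt ≤ σ a := by
    rcases hadj ρt with hρ | hρ
    · exact Tuple.le_of_sort_apply_eq hσ hρ (by omega)
    · have : w.get (σ b) ≤ w.get (σ ρt) := hmono hρ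
      omega
  exact hbs.trans_lt (hst.trans_le hta)

lemma get_sort_succ (hc : IsComposition w) (hi : Inverting w) (hσ : σ = Tuple.sort w.get) {m : ℕ}
    (hm : m + 1 < w.length) :
    w.get (σ ⟨m + 1, hm⟩) = w.get (σ ⟨m, by omega⟩) +
      if σ ⟨m + 1, hm⟩ < σ ⟨m, by omega⟩ then 1 else 0 := by
  set a : Fin w.length := ⟨m, by omega⟩
  set b : Fin w.length := ⟨m + 1, hm⟩
  have hab : a ≤ b := Fin.le_def.mpr (Nat.le_succ m)
  have hle : w.get (σ a) ≤ w.get (σ b) :=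
    (hσ ▸ Tuple.monotone_sort w.get : Monotone (w.get ∘ σ)) hab
  obtain hsucc | hlt := (get_sort_le_succ hi hσ (a := a) (b := b) rfl).eq_or_lt
  · rw [if_pos (sort_lt_of_get_eq_succ hc hi hσ rfl hsucc), hsucc]
  · have heq : w.get (σ b) = w.get (σ a) := by omega
    rw [if_neg (Tuple.le_of_sort_apply_eq hσ hab heq.symm).not_gt, heq, add_zero]

lemma get_sort_eq_runIndex (hc : IsComposition w) (hi : Inverting w)
    (hσ : σ = Tuple.sort w.get) {m : ℕ} (hm : m < w.length) :
    w.get (σ ⟨m, hm⟩) = runIndex (permSeq σ) m := by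
  induction m with
  | zero => rw [get_sort_zero hc hi hσ, runIndex_zero]
  | succ m ih =>
    rw [get_sort_succ hc hi hσ hm, ih (by omega), runIndex_succ, permSeq_of_lt σ hm,
      permSeq_of_lt σ (by omega : m < w.length)]
    rfl

lemma runWord_eq (hc : IsComposition w) (hi : Inverting w)
    (hσ : σ = Tuple.sort w.get) : runWord σ = w := by
  conv_rhs => rw [← List.ofFn_get w]
  refine congrArg List.ofFn (funext fun p => ?_)
  obtain ⟨⟨r, hr⟩, rfl⟩ := σ.surjective p
  rw [Equiv.symm_apply_apply, get_sort_eq_runIndex hc hi hσ hr]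

end SortedInverting

theorem card_inverting_eq_factorial (n : ℕ) :
    Nat.card {α : List ℕ // α.length = n ∧ IsComposition α ∧ Inverting α} = n.factorial := by
  let f (σ : Equiv.Perm (Fin n)) : {α : List ℕ // α.length = n ∧ IsComposition α ∧ Inverting α} :=
    ⟨runWord σ, length_runWord σ, isComposition_runWord σ, inverting_runWord σ⟩
  have hf : Bijective f := by
    refine ⟨fun σ τ h => runWord_injective (congrArg Subtype.val h), ?_⟩
    rintro ⟨w, rfl, hc, hi⟩
    exact ⟨Tuple.sort w.get, Subtype.ext (runWord_eq hc hi rfl)⟩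
  rw [← Nat.card_eq_of_bijective f hf, Nat.card_perm, Nat.card_fin]

/-- The number of pure and inverting compositions of length at most `n` (including the
empty composition) is `n!`. -/
theorem pure_inverting_card (n : ℕ) :
    Nat.card {α : List ℕ // α.length ≤ n ∧ IsComposition α ∧ Inverting α ∧ PureComp α} =
      Nat.factorial n := by
  rw [card_pure_eq_card_inverting, card_inverting_eq_factorial]
end

section
/- Define P_n(q) = (∑_{i=0}^{n} q^i/(1−q)^i) / (∏_{i=1}^{n} 1/(1−q^i)). Then P_n(q) = ∏_{i=1}^{n−1}(1+q+⋯+q^i) · ∑_{i=0}^{n} q^i (1−q)^{n−i}, and in particular P_n(q) is a polynomial in q with P_n(1) = n!. -/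
/-!
Dividing by `∏ (1 - q^i)⁻¹` multiplies by `∏_{i=1}^{n} (1 - q^i) = (1 - q)^n ∏_{i=1}^{n-1} (1 + ⋯ + q^i)`,
and the factor `(1 - q)^n` clears the denominators of `∑ q^i / (1 - q)^i`. At `q = 1` each
`1 + ⋯ + q^i` becomes `i + 1`, and only the term `i = n` of `∑ q^i (1 - q)^(n-i)` survives.
-/

/-- The Bergeron–Reutenauer polynomial
`P_n(q) = ∏_{i=1}^{n-1}(1+q+⋯+q^i) · ∑_{i=0}^{n} q^i (1-q)^{n-i}`. -/
noncomputable def Ppoly (n : ℕ) : Polynomial ℚ :=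
  (∏ i ∈ Finset.Icc 1 (n - 1), ∑ j ∈ Finset.range (i + 1), Polynomial.X ^ j) *
    ∑ i ∈ Finset.range (n + 1), Polynomial.X ^ i * (1 - Polynomial.X) ^ (n - i)

/-- The quotient of Hilbert series `(∑_{i=0}^{n} q^i/(1-q)^i) / (∏_{i=1}^{n} 1/(1-q^i))`. -/
noncomputable def PRat (n : ℕ) : RatFunc ℚ :=
  (∑ i ∈ Finset.range (n + 1), (RatFunc.X : RatFunc ℚ) ^ i / (1 - RatFunc.X) ^ i) /
    ∏ i ∈ Finset.Icc 1 n, (1 - (RatFunc.X : RatFunc ℚ) ^ i)⁻¹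

open Polynomial Finset Nat

section Factorization

variable {R : Type*} [CommRing R] (x : R)

theorem prod_Icc_one_sub_pow_succ (m : ℕ) :
    ∏ i ∈ Icc 1 (m + 1), (1 - x ^ i) =
      (1 - x) ^ (m + 1) * ∏ i ∈ Icc 1 m, ∑ j ∈ range (i + 1), x ^ j := by
  induction m with
  | zero => simp
  | succ m ih =>
    rw [prod_Icc_succ_top (by omega), ih, prod_Icc_succ_top (by omega),
      ← mul_neg_geom_sum x (m + 2)]
    ring

theorem prod_Icc_one_sub_pow (n : ℕ) :
    ∏ i ∈ Icc 1 n, (1 - x ^ i) =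
      (1 - x) ^ n * ∏ i ∈ Icc 1 (n - 1), ∑ j ∈ range (i + 1), x ^ j := by
  cases n with
  | zero => simp
  | succ m => exact prod_Icc_one_sub_pow_succ x m

end Factorization

theorem sum_range_div_pow_mul_pow {K : Type*} [Field K] (x : K) {u : K} (hu : u ≠ 0) (n : ℕ) :
    (∑ i ∈ range (n + 1), x ^ i / u ^ i) * u ^ n = ∑ i ∈ range (n + 1), x ^ i * u ^ (n - i) := by
  rw [sum_mul]
  refine sum_congr rfl fun i hi => ?_
  rw [← pow_sub_mul_pow u (Nat.le_of_lt_succ (mem_range.mp hi))]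
  field_simp

theorem RatFunc.one_sub_X_ne_zero {K : Type*} [Field K] : (1 - RatFunc.X : RatFunc K) ≠ 0 := by
  rw [← map_one (algebraMap K[X] (RatFunc K)), ← RatFunc.algebraMap_X, ← map_sub]
  exact RatFunc.algebraMap_ne_zero fun h => by simpa using congrArg (Polynomial.eval 0) h

theorem prod_Icc_add_one_eq_factorial (m : ℕ) : ∏ i ∈ Icc 1 m, (i + 1) = (m + 1)! := by
  induction m with
  | zero => simp
  | succ m ih => rw [prod_Icc_succ_top (by omega), ih, factorial_succ (m + 1), mul_comm]

theorem eval_one_prod_geom_sum {R : Type*} [CommSemiring R] (n : ℕ) :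
    eval 1 (∏ i ∈ Icc 1 (n - 1), ∑ j ∈ range (i + 1), X ^ j : R[X]) = n ! := by
  cases n with
  | zero => simp
  | succ m =>
    simp only [eval_prod, eval_geom_sum, one_geom_sum, add_tsub_cancel_right]
    rw [← Nat.cast_prod, prod_Icc_add_one_eq_factorial]

theorem eval_one_sum_pow_mul_one_sub_pow {R : Type*} [CommRing R] (n : ℕ) :
    eval 1 (∑ i ∈ range (n + 1), X ^ i * (1 - X) ^ (n - i) : R[X]) = 1 := by
  rw [eval_finsetSum, sum_range_succ, sum_eq_zero]
  · simp
  · intro i hi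
    simp [zero_pow (Nat.sub_ne_zero_of_lt (mem_range.mp hi))]

/-- `P_n(q) = ∏_{i=1}^{n-1}(1+q+⋯+q^i) · ∑_{i=0}^{n} q^i (1-q)^{n-i}`; in particular
`P_n` is a polynomial with `P_n(1) = n!`. -/
theorem P_eq_poly_and_value (n : ℕ) :
    PRat n = algebraMap (Polynomial ℚ) (RatFunc ℚ) (Ppoly n) ∧
    (Ppoly n).eval 1 = Nat.factorial n := by
  constructor
  · rw [PRat, prod_inv_distrib, div_inv_eq_mul, prod_Icc_one_sub_pow, ← mul_assoc,
      sum_range_div_pow_mul_pow _ RatFunc.one_sub_X_ne_zero, mul_comm]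
    simp [Ppoly]
  · rw [Ppoly, eval_mul, eval_one_prod_geom_sum, eval_one_sum_pow_mul_one_sub_pow, mul_one]
end

section
/- The polynomials P_n(q) = ∏_{i=1}^{n−1}(1+q+⋯+q^i) · ∑_{i=0}^{n} q^i(1−q)^{n−i} satisfy the recurrence P_n(q) = P_{n−1}(q) + q^n([n]_q! − P_{n−1}(q)), where [n]_q! = ∏_{i=1}^{n}(1+q+⋯+q^{i−1}). -/
/-- The `q`-factorial `[n]_q! = ∏_{i=1}^{n}(1+q+⋯+q^{i-1})`. -/
noncomputable def qFact (n : ℕ) : Polynomial ℚ :=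
  ∏ i ∈ Finset.Icc 1 n, ∑ j ∈ Finset.range i, Polynomial.X ^ j

/-!
Write `P_n = [n]_q! · S_n` with `S_n = ∑_{i=0}^{n} q^i (1-q)^{n-i}`. Splitting off the last term
gives `S_{n+1} = (1-q) S_n + q^{n+1}`, and `[n+1]_q! = [n]_q! · [n+1]_q` with
`(1-q)[n+1]_q = 1 - q^{n+1}`. Hence `P_{n+1} = (1 - q^{n+1}) P_n + q^{n+1} [n+1]_q!`.
-/

open Finset Polynomial

theorem sum_pow_mul_one_sub_pow_succ {R : Type*} [CommRing R] (x : R) (n : ℕ) :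
    ∑ i ∈ range (n + 2), x ^ i * (1 - x) ^ (n + 1 - i) =
      (1 - x) * ∑ i ∈ range (n + 1), x ^ i * (1 - x) ^ (n - i) + x ^ (n + 1) := by
  rw [sum_range_succ, Nat.sub_self, pow_zero, mul_one, mul_sum]
  congr 1
  refine sum_congr rfl fun i hi => ?_
  rw [show n + 1 - i = n - i + 1 by have := mem_range.mp hi; omega, pow_succ]
  ring

theorem qFact_succ (n : ℕ) : qFact (n + 1) = qFact n * ∑ j ∈ range (n + 1), (X : ℚ[X]) ^ j := by
  rw [qFact, prod_Icc_succ_top (by omega), ← qFact]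

theorem prod_Icc_geom_sum_eq_qFact_succ (n : ℕ) :
    ∏ i ∈ Icc 1 n, ∑ j ∈ range (i + 1), (X : ℚ[X]) ^ j = qFact (n + 1) := by
  induction n with
  | zero => simp [qFact]
  | succ n ih => rw [prod_Icc_succ_top (by omega), ih, ← qFact_succ]

theorem Ppoly_eq_qFact_mul (n : ℕ) :
    Ppoly n = qFact n * ∑ i ∈ range (n + 1), (X : ℚ[X]) ^ i * (1 - X) ^ (n - i) := by
  cases n with
  | zero => simp [Ppoly, qFact]
  | succ n => rw [Ppoly, Nat.add_sub_cancel, prod_Icc_geom_sum_eq_qFact_succ]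

/-- The recurrence `P_n(q) = P_{n-1}(q) + q^n([n]_q! − P_{n-1}(q))` (stated with
`n` replaced by `n+1` so that it covers all `n ≥ 1`). -/
theorem P_recurrence (n : ℕ) :
    Ppoly (n + 1) = Ppoly n + Polynomial.X ^ (n + 1) * (qFact (n + 1) - Ppoly n) := by
  rw [Ppoly_eq_qFact_mul, Ppoly_eq_qFact_mul, sum_pow_mul_one_sub_pow_succ, qFact_succ]
  linear_combination
    qFact n * (∑ i ∈ range (n + 1), (X : ℚ[X]) ^ i * (1 - X) ^ (n - i)) * mul_neg_geom_sum (X : ℚ[X]) (n + 1)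
end

section
/- Let T be a composition tableau of shape α and content γ such that the sorted parts of α and γ coincide as partitions (λ(α) = λ(γ)). Then α = γ. -/
/-- (CT1) Rows of the filling weakly decrease from left to right. -/
def RowsDecrease (α : List ℕ) (T : ℕ → ℕ → ℕ) : Prop :=
  ∀ i j, i < α.length → j + 1 < α.getD i 0 → T i (j + 1) ≤ T i j

/-- (CT2) The leftmost column strictly increases from top to bottom. -/
def FirstColIncr (α : List ℕ) (T : ℕ → ℕ → ℕ) : Prop :=
  ∀ i₁ i₂, i₁ < i₂ → i₂ < α.length → T i₁ 0 < T i₂ 0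

/-- (CT3) The triple rule, for cells `(i,c)` and `(j,c)` in the same column with `i < j`
(rows and columns 0-indexed). -/
def TripleRule (α : List ℕ) (T : ℕ → ℕ → ℕ) : Prop :=
  ∀ i j c, i < j → j < α.length → c < α.getD i 0 → c < α.getD j 0 →
    (α.getD j 0 ≤ α.getD i 0 → 1 ≤ c → (T j c < T i c ∨ T i (c - 1) < T j c)) ∧
    (α.getD i 0 < α.getD j 0 → (T j c < T i c ∨ T i c < T j (c + 1)))

/-- A composition tableau of shape `α`: positive entries in the cells of the diagram of `α`
(and `0` outside), satisfying (CT1), (CT2) and the triple rule (CT3). -/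
def IsCompTableau (α : List ℕ) (T : ℕ → ℕ → ℕ) : Prop :=
  (∀ i j, i < α.length → j < α.getD i 0 → 0 < T i j) ∧
  (∀ i j, α.length ≤ i ∨ α.getD i 0 ≤ j → T i j = 0) ∧
  RowsDecrease α T ∧ FirstColIncr α T ∧ TripleRule α T

/-- The number of cells of the tableau containing the value `v`. -/
def contentCount (α : List ℕ) (T : ℕ → ℕ → ℕ) (v : ℕ) : ℕ :=
  ∑ i ∈ Finset.range α.length, ((Finset.range (α.getD i 0)).filter (fun j => T i j = v)).card

/-- The tableau has content `γ`: each value `v ≥ 1` occurs `γ_v` times. -/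
def HasContent (α : List ℕ) (T : ℕ → ℕ → ℕ) (γ : List ℕ) : Prop :=
  ∀ v, 1 ≤ v → contentCount α T v = γ.getD (v - 1) 0

/-!
Induction on the number of rows. The entries are at most `ℓ(γ) = ℓ(α)` and the first column
increases strictly, so `T 0 0 = 1` and the whole first row, of length `a = α₁`, consists of `1`s;
the triple rule then keeps `1` out of column `a + 1`. Entries within a column are distinct, so
counting the cells of the first `a + 1` columns once by rows and once by values, and using
`λ(α) = λ(γ)`, shows that each value `v` occupies exactly `min(γ_v, a + 1)` of these columns.
For `v = 1` this gives `γ₁ ≤ a`, hence `γ₁ = a`: all `1`s lie in the first row. Deleting that row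
and lowering the other entries by one leaves a composition tableau of shape `(α₂, …)` and content
`(γ₂, …)`.
-/

open Finset

section

variable {α γ : List ℕ} {T : ℕ → ℕ → ℕ}

theorem List.sum_range_getD (L : List ℕ) (f : ℕ → ℕ) :
    ∑ i ∈ Finset.range L.length, f (L.getD i 0) = (L.map f).sum := by
  induction L with
  | nil => simp
  | cons x xs ih =>
    rw [List.length_cons, Finset.sum_range_succ', List.map_cons, List.sum_cons, ← ih]
    simp only [List.getD_cons_succ, List.getD_cons_zero, add_comm]

theorem IsComposition.getD_pos_s13 (hα : IsComposition α) {i : ℕ} (hi : i < α.length) :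
    0 < α.getD i 0 :=
  hα _ (List.getD_eq_getElem α 0 hi ▸ List.getElem_mem hi)

theorem RowsDecrease.antitone (hrd : RowsDecrease α T) {i j j' : ℕ} (hi : i < α.length)
    (hjj' : j ≤ j') (hj' : j' < α.getD i 0) : T i j' ≤ T i j := by
  induction j', hjj' using Nat.le_induction with
  | base => exact le_rfl
  | succ n _ ih => exact (hrd i n hi hj').trans (ih (by omega))

theorem FirstColIncr.add_le (hfc : FirstColIncr α T) {i : ℕ} (hi : i < α.length) :
    T 0 0 + i ≤ T i 0 := by
  induction i with
  | zero => exact le_rfl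
  | succ n ih => have := hfc n (n + 1) n.lt_succ_self hi; have := ih (by omega); omega

section contentCount

theorem contentCount_pos {i j : ℕ} (hi : i < α.length) (hj : j < α.getD i 0) :
    0 < contentCount α T (T i j) :=
  calc 0 < #{j' ∈ range (α.getD i 0) | T i j' = T i j} :=
        card_pos.mpr ⟨j, mem_filter.mpr ⟨mem_range.mpr hj, rfl⟩⟩
    _ ≤ contentCount α T (T i j) :=
        single_le_sum (f := fun i' => #{j' ∈ range (α.getD i' 0) | T i' j' = T i j})
          (fun _ _ => Nat.zero_le _) (mem_range.mpr hi)

theorem contentCount_cons (a v : ℕ) :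
    contentCount (a :: α) T v
      = #{j ∈ range a | T 0 j = v} + contentCount α (fun i j => T (i + 1) j) v := by
  simp only [contentCount, List.length_cons, sum_range_succ', List.getD_cons_succ,
    List.getD_cons_zero]
  exact add_comm _ _

theorem contentCount_sub_one (hpos : ∀ i j, i < α.length → j < α.getD i 0 → 0 < T i j)
    (v : ℕ) : contentCount α (fun i j => T i j - 1) v = contentCount α T (v + 1) := by
  refine sum_congr rfl fun i hi => congrArg card (filter_congr fun j hj => ?_)
  have := hpos i j (mem_range.mp hi) (mem_range.mp hj)
  dsimp only
  omega

theorem HasContent.le_length (hc : HasContent α T γ) {i j : ℕ} (hi : i < α.length)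
    (hj : j < α.getD i 0) (hpos : 0 < T i j) : T i j ≤ γ.length := by
  by_contra! hgt
  have := hc (T i j) hpos
  rw [List.getD_eq_default _ _ (by omega)] at this
  exact (contentCount_pos hi hj).ne' this

end contentCount

namespace IsCompTableau

theorem tail {a : ℕ} (hT : IsCompTableau (a :: α) T) :
    IsCompTableau α (fun i j => T (i + 1) j) := by
  obtain ⟨hpos, hzero, hrd, hfc, htr⟩ := hT
  refine ⟨fun i j hi hj => hpos (i + 1) j ?_ hj, fun i j h => hzero (i + 1) j ?_,
    fun i j hi hj => hrd (i + 1) j ?_ hj, fun i₁ i₂ h h₂ => hfc (i₁ + 1) (i₂ + 1) ?_ ?_,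
    fun i j c hij hj => htr (i + 1) (j + 1) c ?_ ?_⟩ <;> simp_all

theorem sub_one (hT : IsCompTableau α T) (hα : IsComposition α)
    (htwo : ∀ i j, i < α.length → j < α.getD i 0 → 2 ≤ T i j) :
    IsCompTableau α (fun i j => T i j - 1) := by
  obtain ⟨hpos, hzero, hrd, hfc, htr⟩ := hT
  refine ⟨fun i j hi hj => ?_, fun i j h => ?_, fun i j hi hj => ?_, fun i₁ i₂ h h₂ => ?_,
    fun i j c hij hj hci hcj => ?_⟩
  · have := htwo i j hi hj; dsimp only; omega
  · simp [hzero i j h]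
  · exact Nat.sub_le_sub_right (hrd i j hi hj) 1
  · have := hfc i₁ i₂ h h₂
    have := htwo i₁ 0 (by omega) (hα.getD_pos_s13 (by omega))
    dsimp only; omega
  · obtain ⟨hle, hlt⟩ := htr i j c hij hj hci hcj
    have := htwo i c (by omega) hci
    have := htwo j c hj hcj
    refine ⟨fun h hc => ?_, fun h => ?_⟩
    · have := htwo i (c - 1) (by omega) (by omega)
      rcases hle h hc with h' | h' <;> dsimp only <;> omega
    · rcases hlt h with h' | h' <;> dsimp only <;> omega

theorem column_entries_ne (hT : IsCompTableau α T) {i j c : ℕ} (hij : i < j)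
    (hj : j < α.length) (hci : c < α.getD i 0) (hcj : c < α.getD j 0) : T i c ≠ T j c := by
  obtain ⟨-, hzero, hrd, hfc, htr⟩ := hT
  rcases Nat.eq_zero_or_pos c with rfl | hc
  · exact (hfc i j hij hj).ne
  have hright : T j (c + 1) ≤ T j c := by
    by_cases hc' : c + 1 < α.getD j 0
    · exact hrd j c hj hc'
    · simp [hzero j (c + 1) (Or.inr (by omega))]
  have hleft : T i c ≤ T i (c - 1) := hrd.antitone (by omega) (Nat.sub_le c 1) hci
  rcases le_or_gt (α.getD j 0) (α.getD i 0) with hle | hlt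
  · rcases (htr i j c hij hj hci hcj).1 hle hc with h | h <;> omega
  · rcases (htr i j c hij hj hci hcj).2 hlt with h | h <;> omega

end IsCompTableau

section columns

def columnRows (α : List ℕ) (c : ℕ) : Finset ℕ :=
  {i ∈ range α.length | c < α.getD i 0}

def columnValues (α : List ℕ) (T : ℕ → ℕ → ℕ) (c : ℕ) : Finset ℕ :=
  (columnRows α c).image (T · c)

def colCount (α : List ℕ) (T : ℕ → ℕ → ℕ) (k v : ℕ) : ℕ :=
  #{c ∈ range k | v ∈ columnValues α T c}

theorem sum_card_columnRows (α : List ℕ) (k : ℕ) :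
    ∑ c ∈ range k, #(columnRows α c) = (α.map (min · k)).sum := by
  simp only [columnRows, card_filter]
  rw [← List.sum_range_getD, sum_comm]
  refine sum_congr rfl fun i _ => ?_
  have : {c ∈ range k | c < α.getD i 0} = range (min (α.getD i 0) k) := by
    ext c
    simp only [mem_filter, mem_range]
    omega
  rw [← card_filter, this, card_range]

theorem IsCompTableau.card_columnValues (hT : IsCompTableau α T) (c : ℕ) :
    #(columnValues α T c) = #(columnRows α c) :=
  card_image_of_injOn fun i hi i' hi' heq => by
    simp only [columnRows, coe_filter, mem_range, Set.mem_ofPred_eq] at hi hi'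
    by_contra hne
    rcases Nat.lt_or_gt_of_ne hne with h | h
    · exact hT.column_entries_ne h hi'.1 hi.2 hi'.2 heq
    · exact hT.column_entries_ne h hi.1 hi'.2 hi.2 heq.symm

theorem sum_card_columnValues {n : ℕ} (hsub : ∀ c, columnValues α T c ⊆ Ico 1 (n + 1))
    (k : ℕ) : ∑ c ∈ range k, #(columnValues α T c) = ∑ v ∈ range n, colCount α T k (v + 1) := by
  have hcard : ∀ c, #(columnValues α T c) = #{v ∈ Ico 1 (n + 1) | v ∈ columnValues α T c} :=
    fun c => by rw [filter_mem_eq_inter, inter_eq_right.mpr (hsub c)]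
  simp only [hcard, colCount, card_filter]
  rw [sum_comm, sum_Ico_eq_sum_range]
  simp only [add_tsub_cancel_right, add_comm 1]

theorem colCount_le_contentCount (α : List ℕ) (T : ℕ → ℕ → ℕ) (k v : ℕ) :
    colCount α T k v ≤ contentCount α T v := by
  let cells := (range α.length).sigma fun i => {j ∈ range (α.getD i 0) | T i j = v}
  calc colCount α T k v ≤ #(cells.image Sigma.snd) := card_le_card fun c hc => by
        obtain ⟨i, hi, hv⟩ := mem_image.mp (mem_filter.mp hc).2
        simp only [columnRows, mem_filter, mem_range] at hi
        refine mem_image.mpr ⟨⟨i, c⟩, ?_, rfl⟩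
        simpa only [cells, mem_sigma, mem_filter, mem_range] using ⟨hi.1, hi.2, hv⟩
    _ ≤ #cells := card_image_le
    _ = contentCount α T v := card_sigma _ _

theorem IsCompTableau.colCount_eq_min (hT : IsCompTableau α T) (hc : HasContent α T γ)
    (h : (α : Multiset ℕ) = γ) (k : ℕ) {v : ℕ} (hv : v < γ.length) :
    colCount α T k (v + 1) = min (γ.getD v 0) k := by
  have hsub : ∀ c, columnValues α T c ⊆ Ico 1 (γ.length + 1) := by
    intro c w hw
    obtain ⟨i, hi, rfl⟩ := mem_image.mp hw
    simp only [columnRows, mem_filter, mem_range] at hi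
    have hpos := hT.1 i c hi.1 hi.2
    have := hc.le_length hi.1 hi.2 hpos
    rw [mem_Ico]
    omega
  have hle : ∀ w ∈ range γ.length, colCount α T k (w + 1) ≤ min (γ.getD w 0) k := by
    intro w _
    refine le_min ?_ ((card_filter_le _ _).trans_eq (card_range k))
    rw [← Nat.add_sub_cancel w 1, ← hc (w + 1) le_add_self]
    exact colCount_le_contentCount α T k (w + 1)
  have hsum : ∑ w ∈ range γ.length, colCount α T k (w + 1)
      = ∑ w ∈ range γ.length, min (γ.getD w 0) k := by
    rw [← sum_card_columnValues hsub, sum_congr rfl fun c _ => hT.card_columnValues c,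
      sum_card_columnRows]
    refine Eq.trans ?_ (List.sum_range_getD γ (min · k)).symm
    simpa using congrArg (fun s : Multiset ℕ => (s.map (min · k)).sum) h
  exact (sum_eq_sum_iff_of_le hle).mp hsum v (mem_range.mpr hv)

end columns

section firstRow

variable {a : ℕ}

theorem IsCompTableau.first_row_eq_one (hT : IsCompTableau (a :: α) T)
    (hc : HasContent (a :: α) T γ) (hα : IsComposition (a :: α))
    (hlen : γ.length ≤ α.length + 1) : ∀ j < a, T 0 j = 1 := by
  intro j hj
  obtain ⟨hpos, -, hrd, hfc, -⟩ := hT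
  have hlast : α.length < (a :: α).length := Nat.lt_succ_self _
  have hcell := hα.getD_pos_s13 hlast
  have := hfc.add_le hlast
  have := hc.le_length hlast hcell (hpos _ 0 hlast hcell)
  have := hrd.antitone (i := 0) (Nat.succ_pos _) (Nat.zero_le j) hj
  have := hpos 0 j (Nat.succ_pos _) hj
  omega

theorem IsCompTableau.one_lt_of_first_row_eq_one (hT : IsCompTableau (a :: α) T) (ha : 0 < a)
    (hrow : ∀ j < a, T 0 j = 1) {i : ℕ} (hi : i < (a :: α).length)
    (hai : a < (a :: α).getD i 0) : 1 < T i a := by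
  obtain ⟨hpos, -, -, -, htr⟩ := hT
  have hi0 : 0 < i := Nat.pos_of_ne_zero (by rintro rfl; simp at hai)
  have hrow' := hrow (a - 1) (by omega)
  have hcell := hpos i (a - 1) hi (by omega)
  have := (htr 0 i (a - 1) hi0 hi (by simpa using ha) (by omega)).2 (by simpa using hai)
  rw [Nat.sub_add_cancel ha] at this
  omega

theorem contentCount_cons_of_first_row_eq_one (hrow : ∀ j < a, T 0 j = 1) (v : ℕ) :
    contentCount (a :: α) T v
      = (if v = 1 then a else 0) + contentCount α (fun i j => T (i + 1) j) v := by
  rw [contentCount_cons]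
  congr 1
  split_ifs with hv
  · rw [filter_true_of_mem fun j hj => hv ▸ hrow j (mem_range.mp hj), card_range]
  · rw [filter_false_of_mem fun j hj => (hrow j (mem_range.mp hj)).symm ▸ Ne.symm hv,
      card_empty]

theorem IsCompTableau.head_content_eq (hT : IsCompTableau (a :: α) T)
    (hc : HasContent (a :: α) T γ) (hα : IsComposition (a :: α))
    (h : ((a :: α : List ℕ) : Multiset ℕ) = γ) : γ.getD 0 0 = a := by
  have hlen : γ.length = α.length + 1 := by simpa using (congrArg Multiset.card h).symm
  have ha : 0 < a := hα a List.mem_cons_self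
  have hrow := hT.first_row_eq_one hc hα hlen.le
  have hge : a ≤ γ.getD 0 0 := by
    have := hc 1 le_rfl
    rw [contentCount_cons_of_first_row_eq_one hrow, if_pos rfl, Nat.sub_self] at this
    omega
  have hcol : colCount (a :: α) T (a + 1) 1 ≤ a :=
    calc colCount (a :: α) T (a + 1) 1 ≤ #(range a) := card_le_card fun c hc => by
          obtain ⟨hc, hone⟩ := mem_filter.mp hc
          obtain ⟨i, hi, hTi⟩ := mem_image.mp hone
          simp only [columnRows, mem_filter, mem_range] at hc hi ⊢
          rcases Nat.lt_succ_iff_lt_or_eq.mp hc with hca | rfl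
          · exact hca
          · exact absurd hTi (hT.one_lt_of_first_row_eq_one ha hrow hi.1 hi.2).ne'
      _ = a := card_range a
  have := hT.colCount_eq_min hc h (a + 1) (v := 0) (by omega)
  rw [zero_add] at this
  omega

theorem IsCompTableau.peel_first_row (hT : IsCompTableau (a :: α) T)
    (hc : HasContent (a :: α) T (a :: γ)) (hα : IsComposition (a :: α))
    (hlen : γ.length = α.length) :
    IsCompTableau α (fun i j => T (i + 1) j - 1) ∧
      HasContent α (fun i j => T (i + 1) j - 1) γ := by
  have hrow := hT.first_row_eq_one hc hα (by simp [hlen])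
  have hcount := contentCount_cons_of_first_row_eq_one (α := α) hrow
  have hone : contentCount α (fun i j => T (i + 1) j) 1 = 0 := by
    have := hc 1 le_rfl
    rw [hcount, if_pos rfl] at this
    simpa using this
  have htwo : ∀ i j, i < α.length → j < α.getD i 0 → 2 ≤ T (i + 1) j := by
    intro i j hi hj
    have hpos : 0 < T (i + 1) j := hT.tail.1 i j hi hj
    have hne : T (i + 1) j ≠ 1 := fun h1 => by
      have := contentCount_pos (T := fun i j => T (i + 1) j) hi hj
      simp only [h1] at this
      omega
    omega
  refine ⟨hT.tail.sub_one (fun x hx => hα x (List.mem_cons_of_mem a hx)) htwo, fun v hv => ?_⟩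
  obtain ⟨w, rfl⟩ := Nat.exists_eq_add_of_le' hv
  have := hc (w + 2) le_add_self
  rw [hcount, if_neg (by omega), zero_add] at this
  rw [contentCount_sub_one hT.tail.1, this]
  rfl

end firstRow

end

theorem shape_eq_content_general (α γ : List ℕ) (T : ℕ → ℕ → ℕ)
    (hα : IsComposition α)
    (hT : IsCompTableau α T) (hc : HasContent α T γ)
    (h : (α : Multiset ℕ) = (γ : Multiset ℕ)) : α = γ := by
  induction α generalizing γ T with
  | nil => simpa using h.symm
  | cons a α ih =>
    cases γ with
    | nil => simp at h
    | cons g γ =>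
      obtain rfl : g = a := by simpa using hT.head_content_eq hc hα h
      have h' : (α : Multiset ℕ) = γ := by simpa using h
      have hlen : γ.length = α.length := by simpa using (congrArg Multiset.card h').symm
      obtain ⟨hT', hc'⟩ := hT.peel_first_row hc hα hlen
      rw [ih γ _ (fun x hx => hα x (List.mem_cons_of_mem g hx)) hT' hc' h']

/-- If `T` is a composition tableau of shape `α` and content `γ` with `λ(α) = λ(γ)`
(i.e. the parts of `α` and `γ` agree as multisets), then `α = γ`. -/
theorem shape_eq_content (α γ : List ℕ) (T : ℕ → ℕ → ℕ)
    (hα : IsComposition α) (hγ : IsComposition γ)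
    (hT : IsCompTableau α T) (hc : HasContent α T γ)
    (h : (α : Multiset ℕ) = (γ : Multiset ℕ)) : α = γ :=
  shape_eq_content_general α γ T hα hT hc h
end

section
/- For any composition β and partition λ, the super filling S(λ, β) is a filling of its shape satisfying the weakly-decreasing-rows condition and the triple rule, and its reading word (appended cells read top to bottom, column by column, right to left) is a reverse lattice word. -/
/-- The (0-indexed) rank of position `p` among the parts of `beta` (padded with zeros up to
length `m`), parts ordered decreasingly with earlier equal parts considered smaller. -/
def phiRank (beta : List ℕ) (m p : ℕ) : ℕ :=
  (List.range m).countP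
    (fun q => decide (beta.getD p 0 < beta.getD q 0 ∨ (beta.getD q 0 = beta.getD p 0 ∧ p < q)))

/-- The map `φ`: add `λ_i` to the `i`-th largest part of `β` (padding `β` with zeros if `λ`
is longer, deleting zero parts at the end). -/
def phiVal (lam beta : List ℕ) : List ℕ :=
  ((List.range (max beta.length lam.length)).map
    (fun p => beta.getD p 0 + lam.getD (phiRank beta (max beta.length lam.length) p) 0)).filter
    (fun x => decide (0 < x))

/-- The shape of the super filling `S(λ, β)`: append `λ_i` cells to the `i`-th longest row
of `β` (lower rows considered longer among equal lengths), padding `β` with zero rows if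
`λ` is longer than `β`. -/
def sfShape (lam beta : List ℕ) : List ℕ :=
  (List.range (max beta.length lam.length)).map
    (fun p => beta.getD p 0 + lam.getD (phiRank beta (max beta.length lam.length) p) 0)

/-- The super filling `S(λ, β)` (with `k = ℓ(λ)` and `m` rows): the cells of the `i`-th row
from the bottom of `β` contain `k + i`; the appended cells of the `j`-th longest row of the
resulting shape contain `k − j + 1` (among equal-length rows, the lower row receives the
lesser entries), so that the appended content is `λ^*`. -/
def superFill (lam beta : List ℕ) : ℕ → ℕ → ℕ := fun p j =>
  let k := lam.length
  let m := max beta.length k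
  let a := sfShape lam beta
  if p < m ∧ j < a.getD p 0 then
    if j < beta.getD p 0 then k + (m - p)
    else k - (List.range m).countP
      (fun q => decide (a.getD p 0 < a.getD q 0 ∨ (a.getD q 0 = a.getD p 0 ∧ q < p)))
  else 0

/-- The reading word of the appended cells of `S(λ, β)`: top to bottom, column by column,
from right to left. -/
def appendedReadingWord (lam beta : List ℕ) : List ℕ :=
  let m := max beta.length lam.length
  let a := sfShape lam beta
  ((List.range (maxPart a)).reverse).flatMap (fun c =>
    (List.range m).filterMap (fun p =>
      if beta.getD p 0 ≤ c ∧ c < a.getD p 0 then some (superFill lam beta p c) else none))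

/-- A reverse lattice word (for values up to `k`): every prefix contains at least as many
`i`'s as `(i−1)`'s, for each `1 < i ≤ k`. -/
def IsReverseLattice (w : List ℕ) (k : ℕ) : Prop :=
  ∀ p, ∀ v, 1 < v → v ≤ k → (w.take p).count (v - 1) ≤ (w.take p).count v

/-!
Rows are compared by two strict total orders: by their length in `β`, lower rows winning ties
(this decides which part of `λ` a row receives), and by their length in `α`, upper rows winning
ties (this decides the appended entries). Since `λ` is weakly decreasing, a longer row of `β`
stays longer in `α`, and a longer row of `α` has at least as many appended cells. Cells of `β`
hold entries above `k = ℓ(λ)` that decrease downwards, while appended cells hold entries at most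
`k` that decrease with the row's rank, which gives both the row condition and the triple rule.
For the lattice property, the cells holding `v - 1` form a segment of one row; shifting it to the
right by the difference of the two row lengths lands injectively on cells holding `v`, each read
before the cell it comes from (in the same column of a higher row when the lengths agree).
-/

namespace SuperFilling

open Finset

theorem countP_range_eq_card_filter (m : ℕ) (P : ℕ → Prop) [DecidablePred P] :
    (List.range m).countP (fun q => decide (P q)) = #{q ∈ range m | P q} := by
  simp [Finset.card, Finset.filter_val, Multiset.range, List.countP_eq_length_filter]

theorem antitone_getD_of_pairwise {l : List ℕ} (hl : l.Pairwise (· ≥ ·)) :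
    Antitone (l.getD · 0) := by
  intro i j hij
  rcases hij.eq_or_lt with rfl | hij
  · rfl
  by_cases hj : j < l.length
  · simp only [List.getD_eq_getElem _ _ hj, List.getD_eq_getElem _ _ (hij.trans hj)]
    exact List.pairwise_iff_getElem.1 hl _ _ _ _ hij
  · exact (List.getD_eq_default _ _ (not_lt.1 hj)).trans_le (Nat.zero_le _)

theorem countP_take_le_countP_take {α β : Type*} [LinearOrder β] {l : List α} {key : α → β}
    (hl : l.Pairwise fun x y => key x < key y) {P Q : α → Bool} (f : α → α)
    (hf : ∀ x ∈ l, P x → f x ∈ l ∧ Q (f x) ∧ key (f x) < key x)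
    (hinj : ∀ x ∈ l, ∀ y ∈ l, P x → P y → f x = f y → x = y) (n : ℕ) :
    (l.take n).countP P ≤ (l.take n).countP Q := by
  classical
  have hsplit := List.take_append_drop n l
  have hclosed : ∀ x ∈ l.take n, ∀ y ∈ l, key y < key x → y ∈ l.take n := by
    intro x hx y hy hyx
    rw [← hsplit, List.mem_append] at hy
    refine hy.resolve_right fun hy' => lt_asymm hyx ?_
    rw [← hsplit, List.pairwise_append] at hl
    exact hl.2.2 x hx y hy'
  have hnodup : (l.take n).Nodup :=
    (hl.sublist (List.take_sublist n l)).imp fun h e => (e ▸ h).false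
  have hcard (R : α → Bool) : (l.take n).countP R = #{x ∈ (l.take n).toFinset | R x} := by
    rw [List.countP_eq_length_filter, ← List.toFinset_card_of_nodup (hnodup.filter _),
      List.toFinset_filter]
  rw [hcard, hcard]
  refine card_le_card_of_injOn f (fun x hx => ?_) (fun x hx y hy hxy => ?_)
  · simp only [coe_filter, List.mem_toFinset, Set.mem_ofPred_eq] at hx ⊢
    obtain ⟨hfl, hQ, hlt⟩ := hf x (List.mem_of_mem_take hx.1) hx.2
    exact ⟨hclosed x hx.1 _ hfl hlt, hQ⟩
  · simp only [coe_filter, List.mem_toFinset, Set.mem_ofPred_eq] at hx hy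
    exact hinj x (List.mem_of_mem_take hx.1) y (List.mem_of_mem_take hy.1) hx.2 hy.2 hxy

section KeyRank

variable {β : Type*} [LinearOrder β] {key : ℕ → β} {m p q : ℕ}

variable (key m) in
/-- The position of `p` when `0, …, m - 1` are listed by decreasing `key`, counted from `0`. -/
def keyRank (p : ℕ) : ℕ := #{q ∈ range m | key p < key q}

theorem keyRank_lt_keyRank (hq : q < m) (h : key p < key q) :
    keyRank key m q < keyRank key m p := by
  refine card_lt_card ((ssubset_iff_of_subset fun x hx => ?_).2 ⟨q, ?_, ?_⟩)
  · simp only [mem_filter] at hx ⊢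
    exact ⟨hx.1, h.trans hx.2⟩
  · simp [hq, h]
  · simp

theorem keyRank_lt (hp : p < m) : keyRank key m p < m := by
  simpa [keyRank] using card_lt_card (filter_ssubset.2 ⟨p, mem_range.2 hp, lt_irrefl (key p)⟩)

variable (hkey : Function.Injective key)
include hkey

theorem keyRank_lt_keyRank_iff (hp : p < m) (hq : q < m) :
    keyRank key m q < keyRank key m p ↔ key p < key q := by
  refine ⟨fun h => ?_, keyRank_lt_keyRank hq⟩
  rcases lt_trichotomy (key p) (key q) with hlt | heq | hgt
  · exact hlt
  · exact absurd h (by rw [hkey heq]; exact lt_irrefl _)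
  · exact absurd h (keyRank_lt_keyRank hp hgt).asymm

theorem keyRank_injOn : Set.InjOn (keyRank key m) (Set.Iio m) := by
  intro p hp q hq h
  by_contra hne
  rcases (hkey.ne hne).lt_or_gt with hlt | hgt
  · exact (keyRank_lt_keyRank hq hlt).ne h.symm
  · exact (keyRank_lt_keyRank hp hgt).ne h

theorem exists_keyRank_eq {s : ℕ} (hs : s < m) : ∃ p < m, keyRank key m p = s := by
  obtain ⟨p, hp, rfl⟩ := surj_on_of_inj_on_of_card_le (s := range m) (t := range m)
    (fun p _ => keyRank key m p) (fun p hp => mem_range.2 (keyRank_lt (mem_range.1 hp)))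
    (fun p q hp hq h => keyRank_injOn hkey (mem_range.1 hp) (mem_range.1 hq) h) le_rfl s
    (mem_range.2 hs)
  exact ⟨p, mem_range.1 hp, rfl⟩

theorem keyRank_add_one (hp : p < m) :
    keyRank key m p + 1 = #{q ∈ range m | key p ≤ key q} := by
  have : ({q ∈ range m | key p ≤ key q} : Finset ℕ) =
      insert p {q ∈ range m | key p < key q} := by
    ext q
    simp only [mem_filter, mem_range, mem_insert, le_iff_lt_or_eq, hkey.eq_iff]
    constructor
    · rintro ⟨hq, h | rfl⟩ <;> simp_all
    · rintro (rfl | ⟨hq, h⟩) <;> simp_all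
  rw [this, card_insert_of_notMem (by simp), keyRank]

end KeyRank

section SuperFill

variable (lam beta : List ℕ) {p q : ℕ}

abbrev numRows : ℕ := max beta.length lam.length

def baseKey (p : ℕ) : ℕ ×ₗ ℕ := toLex (beta.getD p 0, p)

def shapeKey (p : ℕ) : ℕ ×ₗ ℕᵒᵈ :=
  toLex ((sfShape lam beta).getD p 0, OrderDual.toDual p)

abbrev appendRank (p : ℕ) : ℕ := keyRank (shapeKey lam beta) (numRows lam beta) p

theorem baseKey_injective : Function.Injective (baseKey beta) :=
  fun _ _ h => (Prod.ext_iff.1 (toLex.injective h)).2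

theorem shapeKey_injective : Function.Injective (shapeKey lam beta) :=
  fun _ _ h => OrderDual.toDual.injective (Prod.ext_iff.1 (toLex.injective h)).2

theorem phiRank_eq_keyRank (m p : ℕ) : phiRank beta m p = keyRank (baseKey beta) m p := by
  rw [phiRank, countP_range_eq_card_filter, keyRank]
  simp only [baseKey, Prod.Lex.toLex_lt_toLex, eq_comm]

theorem length_sfShape : (sfShape lam beta).length = numRows lam beta := by
  simp [sfShape]

theorem getD_sfShape (hp : p < numRows lam beta) :
    (sfShape lam beta).getD p 0 =
      beta.getD p 0 + lam.getD (phiRank beta (numRows lam beta) p) 0 := by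
  simp [sfShape, List.getD_eq_getElem?_getD, hp]

theorem superFill_eq (hp : p < numRows lam beta) {j : ℕ} (hj : j < (sfShape lam beta).getD p 0) :
    superFill lam beta p j =
      if j < beta.getD p 0 then lam.length + (numRows lam beta - p)
      else lam.length - appendRank lam beta p := by
  rw [superFill, if_pos ⟨hp, hj⟩, appendRank, keyRank, countP_range_eq_card_filter]
  simp only [shapeKey, Prod.Lex.toLex_lt_toLex, OrderDual.toDual_lt_toDual, eq_comm]

theorem appendRank_lt_appendRank_iff (hp : p < numRows lam beta) (hq : q < numRows lam beta) :
    appendRank lam beta q < appendRank lam beta p ↔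
      (sfShape lam beta).getD p 0 < (sfShape lam beta).getD q 0 ∨
        ((sfShape lam beta).getD p 0 = (sfShape lam beta).getD q 0 ∧ q < p) := by
  rw [appendRank, appendRank, keyRank_lt_keyRank_iff (shapeKey_injective lam beta) hp hq]
  simp only [shapeKey, Prod.Lex.toLex_lt_toLex, OrderDual.toDual_lt_toDual]

variable {lam} (hlam : Antitone (lam.getD · 0))
include hlam

theorem getD_phiRank_le_of_getD_lt (hq : q < numRows lam beta) (h : beta.getD p 0 < beta.getD q 0) :
    lam.getD (phiRank beta (numRows lam beta) p) 0 ≤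
      lam.getD (phiRank beta (numRows lam beta) q) 0 := by
  refine hlam (le_of_lt ?_)
  rw [phiRank_eq_keyRank, phiRank_eq_keyRank]
  exact keyRank_lt_keyRank hq (Prod.Lex.toLex_lt_toLex.2 (Or.inl h))

theorem getD_sfShape_lt_of_getD_lt (hp : p < numRows lam beta) (hq : q < numRows lam beta)
    (h : beta.getD p 0 < beta.getD q 0) :
    (sfShape lam beta).getD p 0 < (sfShape lam beta).getD q 0 := by
  have := getD_phiRank_le_of_getD_lt beta hlam hq h
  rw [getD_sfShape lam beta hp, getD_sfShape lam beta hq]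
  omega

theorem appended_le_of_getD_sfShape_le (hp : p < numRows lam beta) (hq : q < numRows lam beta)
    (h : (sfShape lam beta).getD q 0 ≤ (sfShape lam beta).getD p 0) :
    (sfShape lam beta).getD q 0 - beta.getD q 0 ≤
      (sfShape lam beta).getD p 0 - beta.getD p 0 := by
  have hshape := getD_sfShape_lt_of_getD_lt beta hlam hp hq
  rw [getD_sfShape lam beta hp, getD_sfShape lam beta hq] at h hshape ⊢
  rcases lt_or_ge (beta.getD q 0) (beta.getD p 0) with hlt | hge
  · have := getD_phiRank_le_of_getD_lt beta hlam hp hlt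
    omega
  · omega

theorem appendRank_lt_length (hp : p < numRows lam beta)
    (hcell : beta.getD p 0 < (sfShape lam beta).getD p 0) : appendRank lam beta p < lam.length := by
  -- Every row at least as long as row `p` in `α` received a positive part of `λ`, and distinct
  -- rows receive distinct parts.
  rw [← Nat.add_one_le_iff, appendRank, keyRank_add_one (shapeKey_injective lam beta) hp]
  refine (card_le_card_of_injOn (phiRank beta (numRows lam beta)) (fun q hq => ?_)
    (fun q hq q' hq' h => ?_)).trans (card_range _).le
  · simp only [coe_filter, mem_range, Set.mem_ofPred_eq, shapeKey, Prod.Lex.toLex_le_toLex] at hq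
    obtain ⟨hq, hpq⟩ := hq
    have hle : (sfShape lam beta).getD p 0 ≤ (sfShape lam beta).getD q 0 := by omega
    rw [getD_sfShape lam beta hp, getD_sfShape lam beta hq] at hle
    rw [getD_sfShape lam beta hp] at hcell
    have hpos : 0 < lam.getD (phiRank beta (numRows lam beta) q) 0 := by
      by_contra h0
      have := getD_phiRank_le_of_getD_lt beta hlam hq (by omega : beta.getD p 0 < beta.getD q 0)
      omega
    by_contra hk
    exact hpos.ne' (List.getD_eq_default _ _ (not_lt.1 (by simpa using hk)))
  · simp only [coe_filter, mem_range, Set.mem_ofPred_eq] at hq hq'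
    rw [phiRank_eq_keyRank, phiRank_eq_keyRank] at h
    exact keyRank_injOn (baseKey_injective beta) hq.1 hq'.1 h

end SuperFill

section Properties

variable {lam : List ℕ} (beta : List ℕ) {i j c : ℕ}

theorem rowsDecrease_superFill : RowsDecrease (sfShape lam beta) (superFill lam beta) := by
  intro p j hp hj
  rw [length_sfShape lam beta] at hp
  rw [superFill_eq lam beta hp hj, superFill_eq lam beta hp (by omega)]
  split_ifs <;> omega

variable (hlam : Antitone (lam.getD · 0))
include hlam

theorem superFill_lt_of_getD_sfShape_le (hij : i < j) (hj : j < numRows lam beta)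
    (hci : c < (sfShape lam beta).getD i 0) (hcj : c < (sfShape lam beta).getD j 0)
    (h : (sfShape lam beta).getD j 0 ≤ (sfShape lam beta).getD i 0) :
    superFill lam beta j c < superFill lam beta i c := by
  have hi := hij.trans hj
  rw [superFill_eq lam beta hi hci, superFill_eq lam beta hj hcj]
  split_ifs
  · omega
  · exact absurd (getD_sfShape_lt_of_getD_lt beta hlam hi hj (by omega)) h.not_gt
  · omega
  · have := appendRank_lt_length beta hlam hi (by omega)
    have := (appendRank_lt_appendRank_iff lam beta hj hi).2 (h.lt_or_eq.imp_right (⟨·, hij⟩))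
    omega

theorem superFill_lt_or_lt_of_getD_sfShape_lt (hij : i < j) (hj : j < numRows lam beta)
    (hci : c < (sfShape lam beta).getD i 0)
    (h : (sfShape lam beta).getD i 0 < (sfShape lam beta).getD j 0) :
    superFill lam beta j c < superFill lam beta i c ∨
      superFill lam beta i c < superFill lam beta j (c + 1) := by
  have hi := hij.trans hj
  rw [superFill_eq lam beta hi hci]
  by_cases hbi : c < beta.getD i 0
  · left
    rw [if_pos hbi, superFill_eq lam beta hj (hci.trans h)]
    split_ifs <;> omega
  · right
    have := appendRank_lt_length beta hlam hi (by omega)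
    have := (appendRank_lt_appendRank_iff lam beta hi hj).2 (Or.inl h)
    rw [if_neg hbi, superFill_eq lam beta hj (by omega)]
    split_ifs <;> omega

theorem tripleRule_superFill : TripleRule (sfShape lam beta) (superFill lam beta) := by
  intro i j c hij hj hci hcj
  rw [length_sfShape lam beta] at hj
  exact ⟨fun h _ => Or.inl (superFill_lt_of_getD_sfShape_le beta hlam hij hj hci hcj h),
    superFill_lt_or_lt_of_getD_sfShape_lt beta hlam hij hj hci⟩

end Properties

section ReadingWord

variable (lam beta : List ℕ)

def readingKey (x : ℕ × ℕ) : ℕᵒᵈ ×ₗ ℕ := toLex (OrderDual.toDual x.1, x.2)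

/-- Cells are `(column, row)` pairs, in the order in which `appendedReadingWord` reads them. -/
def appendedCells : List (ℕ × ℕ) :=
  (List.range (maxPart (sfShape lam beta))).reverse.flatMap fun c =>
    (List.range (numRows lam beta)).filterMap fun p =>
      if beta.getD p 0 ≤ c ∧ c < (sfShape lam beta).getD p 0 then some (c, p) else none

theorem appendedReadingWord_eq_map :
    appendedReadingWord lam beta =
      (appendedCells lam beta).map fun x => superFill lam beta x.2 x.1 := by
  simp [appendedReadingWord, appendedCells, List.map_flatMap, List.map_filterMap]

theorem mem_appendedCells {c p : ℕ} :
    (c, p) ∈ appendedCells lam beta ↔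
      p < numRows lam beta ∧ beta.getD p 0 ≤ c ∧ c < (sfShape lam beta).getD p 0 := by
  simp only [appendedCells, List.mem_flatMap, List.mem_reverse, List.mem_range,
    List.mem_filterMap, Option.ite_none_right_eq_some, Option.some.injEq, Prod.mk.injEq]
  constructor
  · rintro ⟨c, -, p, hp, hcell, rfl, rfl⟩
    exact ⟨hp, hcell⟩
  · rintro ⟨hp, hcell⟩
    refine ⟨c, ?_, p, hp, hcell, rfl, rfl⟩
    have hpl : p < (sfShape lam beta).length := by rwa [length_sfShape]
    calc c < (sfShape lam beta).getD p 0 := hcell.2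
      _ ≤ maxPart (sfShape lam beta) := by
        rw [List.getD_eq_getElem _ _ hpl]
        exact List.le_max_of_le' 0 (List.getElem_mem hpl) le_rfl

theorem pairwise_appendedCells :
    (appendedCells lam beta).Pairwise fun x y => readingKey x < readingKey y := by
  rw [appendedCells, List.pairwise_flatMap, List.pairwise_reverse]
  constructor
  · intro c _
    rw [List.pairwise_filterMap]
    refine List.pairwise_lt_range.imp fun hpp' x hx y hy => ?_
    split_ifs at hx hy
    cases hx; cases hy
    simpa [readingKey, Prod.Lex.toLex_lt_toLex] using hpp'
  · refine List.pairwise_lt_range.imp fun hcc' x hx y hy => ?_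
    simp only [List.mem_filterMap, Option.ite_none_right_eq_some, Option.some.injEq] at hx hy
    obtain ⟨_, _, _, rfl⟩ := hx
    obtain ⟨_, _, _, rfl⟩ := hy
    simp [readingKey, Prod.Lex.toLex_lt_toLex, hcc']

end ReadingWord

theorem superFill_eq_iff_of_mem_appendedCells {lam : List ℕ} (beta : List ℕ)
    (hlam : Antitone (lam.getD · 0)) {c q u r : ℕ} (hx : (c, q) ∈ appendedCells lam beta)
    (hul : u ≤ lam.length) (hr : r < numRows lam beta)
    (hrank : appendRank lam beta r = lam.length - u) :
    superFill lam beta q c = u ↔ q = r := by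
  rw [mem_appendedCells] at hx
  have := appendRank_lt_length beta hlam hx.1 (by omega)
  rw [superFill_eq lam beta hx.1 hx.2.2, if_neg (by omega)]
  constructor
  · intro h
    exact keyRank_injOn (shapeKey_injective lam beta) hx.1 hr
      (show appendRank lam beta q = appendRank lam beta r by omega)
  · rintro rfl
    omega

theorem isReverseLattice_appendedReadingWord {lam : List ℕ} (beta : List ℕ)
    (hlam : Antitone (lam.getD · 0)) :
    IsReverseLattice (appendedReadingWord lam beta) lam.length := by
  intro n v hv hvk
  have hkm : lam.length ≤ numRows lam beta := le_max_right _ _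
  have hinj := shapeKey_injective lam beta
  obtain ⟨p, hp, hrp : appendRank lam beta p = lam.length - v⟩ :=
    exists_keyRank_eq hinj (m := numRows lam beta) (s := lam.length - v) (by omega)
  obtain ⟨p', hp', hrp' : appendRank lam beta p' = lam.length - (v - 1)⟩ :=
    exists_keyRank_eq hinj (m := numRows lam beta) (s := lam.length - (v - 1)) (by omega)
  have hrow : ∀ {c q}, (c, q) ∈ appendedCells lam beta →
      superFill lam beta q c = v - 1 → q = p' :=
    fun hx => (superFill_eq_iff_of_mem_appendedCells beta hlam hx (by omega) hp' hrp').1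
  have horder := (appendRank_lt_appendRank_iff lam beta hp' hp).1 (by omega)
  have hlen := appended_le_of_getD_sfShape_le beta hlam hp hp' (by omega)
  rw [appendedReadingWord_eq_map, ← List.map_take, List.count_eq_countP, List.count_eq_countP,
    List.countP_map, List.countP_map]
  refine countP_take_le_countP_take (pairwise_appendedCells lam beta)
    (fun x => (x.1 + (sfShape lam beta).getD p 0 - (sfShape lam beta).getD p' 0, p)) ?_ ?_ n
  · rintro ⟨c, q⟩ hx hP
    simp only [Function.comp_apply, beq_iff_eq] at hP ⊢
    obtain rfl := hrow hx hP
    have hcell := (mem_appendedCells lam beta).1 hx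
    have hcell' := (mem_appendedCells lam beta
      (c := c + (sfShape lam beta).getD p 0 - (sfShape lam beta).getD q 0) (p := p)).2
      ⟨hp, by omega, by omega⟩
    refine ⟨hcell', (superFill_eq_iff_of_mem_appendedCells beta hlam hcell' hvk hp hrp).2
      rfl, ?_⟩
    simp only [readingKey, Prod.Lex.toLex_lt_toLex, OrderDual.toDual_lt_toDual,
      OrderDual.toDual_inj]
    omega
  · rintro ⟨c, q⟩ hx ⟨c', q'⟩ hy hPx hPy h
    simp only [Function.comp_apply, beq_iff_eq] at hPx hPy h
    obtain rfl := hrow hx hPx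
    obtain rfl := hrow hy hPy
    have := (mem_appendedCells lam beta).1 hx
    have := (mem_appendedCells lam beta).1 hy
    simp only [Prod.mk.injEq, and_true] at h ⊢
    omega

end SuperFilling

theorem superfill_is_LR_general (lam beta : List ℕ)
    (hlam : List.Pairwise (· ≥ ·) lam) :
    RowsDecrease (sfShape lam beta) (superFill lam beta) ∧
    TripleRule (sfShape lam beta) (superFill lam beta) ∧
    IsReverseLattice (appendedReadingWord lam beta) lam.length := by
  have hanti := SuperFilling.antitone_getD_of_pairwise hlam
  exact ⟨SuperFilling.rowsDecrease_superFill beta, SuperFilling.tripleRule_superFill beta hanti,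
    SuperFilling.isReverseLattice_appendedReadingWord beta hanti⟩

/-- The super filling `S(λ, β)` satisfies the weakly-decreasing-rows condition and the
triple rule, and its appended reading word is a reverse lattice word. -/
theorem superfill_is_LR (lam beta : List ℕ)
    (hlam : List.Pairwise (· ≥ ·) lam) (hlam' : IsComposition lam)
    (hbeta : IsComposition beta) :
    RowsDecrease (sfShape lam beta) (superFill lam beta) ∧
    TripleRule (sfShape lam beta) (superFill lam beta) ∧
    IsReverseLattice (appendedReadingWord lam beta) lam.length :=
  superfill_is_LR_general lam beta hlam
end
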